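/- arXiv:math/0603243 — 4 statements merged into one kernel-verified Lean document; each statement's English description precedes it below -/
import Mathlib

section
/- For fractional ideals I ⊇ J of R, the length of the R-module I/J equals the cardinality of v(I) \ v(J), where v(I) denotes the set of valuations of nonzero elements of I. -/
/-!
By the correspondence theorem, the length of `I / J` is the Krull dimension of the interval
`[J, I]` of submodules of `K`. Since the conductor of `R` is nonzero, `J` contains every element
of large value; residual rationality lets one raise the value of an element of `M₂` whose value
already occurs in `M₁ ⊆ M₂` by subtracting an `R`-multiple of an element of `M₁`, so
`M ↦ v(M) \ v(J)` is strictly monotone on `[J, I]` and the length is at most `#(v(I) \ v(J))`.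
Conversely the submodules `J + (I ∩ {v ≥ c})` drop strictly as `c` passes each value in
`v(I) \ v(J)`, which gives a chain of that length.
-/

open Submodule IsLocalRing

noncomputable section

/-- Length of an `R`-module, defined as the Krull dimension of its submodule lattice. -/
def modLength (R : Type*) [Ring R] (M : Type*) [AddCommGroup M] [Module R M] : WithBot ℕ∞ :=
  Order.krullDim (Submodule R M)

/-- Length of the quotient `I / J` for submodules `J ≤ I` of an ambient module. -/
def qlen (R : Type*) [CommRing R] {K : Type*} [AddCommGroup K] [Module R K]
    (I J : Submodule R K) : WithBot ℕ∞ :=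
  modLength R (I ⧸ (J.comap I.subtype))

/-- The image of an ideal of `R` in `K`, viewed as an `R`-submodule of `K`. -/
def idl (R : Type*) [CommRing R] (K : Type*) [CommRing K] [Algebra R K] (I : Ideal R) :
    Submodule R K :=
  Submodule.map (Algebra.linearMap R K) I

/-- The blowing-up `Λ(I) = ⋃ₙ (Iⁿ : Iⁿ)` of `R` along `I`, inside `K`. -/
def blowup (R : Type*) [CommRing R] (K : Type*) [CommRing K] [Algebra R K] (I : Ideal R) :
    Submodule R K :=
  ⨆ n : ℕ, (idl R K I ^ n) / (idl R K I ^ n)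

/-- The set of values of the nonzero elements of a fractional ideal. -/
def vvals {R : Type*} [CommRing R] {K : Type*} [CommRing K] [Algebra R K]
    (v : K → WithTop ℤ) (J : Submodule R K) : Set (WithTop ℤ) :=
  v '' {y | y ∈ J ∧ y ≠ 0}

namespace Order

theorem krullDim_le_of_strictMono_nat {α : Type*} [Preorder α] {f : α → ℕ} (hf : StrictMono f)
    {n : ℕ} (hn : ∀ a, f a ≤ n) : krullDim α ≤ n :=
  calc krullDim α ≤ krullDim (Set.Iic n) :=
        krullDim_le_of_strictMono (fun a ↦ ⟨f a, hn a⟩) fun _ _ h ↦ hf h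
    _ = n := by rw [← height_eq_krullDim_Iic, height_nat]; rfl

theorem le_krullDim_of_strictAntiOn {α β : Type*} [LinearOrder α] [Preorder β] {s : Finset α}
    {n : ℕ} (hs : s.card = n + 1) {f : α → β} (hf : StrictAntiOn f s) : n ≤ krullDim β := by
  let σ := s.orderIsoOfFin hs
  exact LTSeries.length_le_krullDim <| LTSeries.mk n (fun k ↦ f (σ k.rev)) fun k l hkl ↦
    hf (σ l.rev).2 (σ k.rev).2 (σ.strictMono (Fin.rev_lt_rev.mpr hkl))

end Order

def Submodule.quotientComapSubtypeOrderIso {R M : Type*} [Ring R] [AddCommGroup M] [Module R M]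
    {I J : Submodule R M} (hJI : J ≤ I) :
    Submodule R (I ⧸ J.comap I.subtype) ≃o Set.Icc J I where
  toFun N := ⟨(N.comap (mkQ _)).map I.subtype,
    fun x hx ↦ ⟨⟨x, hJI hx⟩, by
      have h0 : (Quotient.mk ⟨x, hJI hx⟩ : I ⧸ J.comap I.subtype) = 0 :=
        (Quotient.mk_eq_zero _).mpr hx
      simp [h0], rfl⟩,
    map_subtype_le _ _⟩
  invFun P := (P.1.comap I.subtype).map (mkQ _)
  left_inv N := by
    simp only [comap_map_eq_of_injective I.injective_subtype,
      map_comap_eq_of_surjective (mkQ_surjective _)]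
  right_inv P := by
    ext1
    simp [inf_eq_right.mpr hJI, inf_eq_right.mpr P.2.2, sup_eq_right.mpr P.2.1]
  map_rel_iff' {a b} := by
    rw [← Subtype.coe_le_coe]
    change map _ _ ≤ map _ _ ↔ _
    rw [map_le_map_iff_of_injective I.injective_subtype,
      comap_le_comap_iff_of_surjective (mkQ_surjective _)]

theorem qlen_eq_krullDim_Icc {R M : Type*} [CommRing R] [AddCommGroup M] [Module R M]
    {I J : Submodule R M} (hJI : J ≤ I) : qlen R I J = Order.krullDim (Set.Icc J I) :=
  Order.krullDim_eq_of_orderIso (quotientComapSubtypeOrderIso hJI)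

section Valuation

variable {R K : Type*} [CommRing R] [Field K] [Algebra R K] (v : AddValuation K (WithTop ℤ))

theorem top_notMem_vvals (M : Submodule R K) : ⊤ ∉ vvals v M := by
  rintro ⟨x, ⟨-, hx0⟩, hx⟩
  exact hx0 (v.top_iff.mp hx)

theorem vvals_mono {M N : Submodule R K} (h : M ≤ N) : vvals v M ⊆ vvals v N :=
  Set.image_mono fun _ hx ↦ ⟨h hx.1, hx.2⟩

def AddValuation.geSubmodule (hv : ∀ r : R, 0 ≤ v (algebraMap R K r)) (c : WithTop ℤ) :
    Submodule R K where
  carrier := {x | c ≤ v x}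
  add_mem' hx hy := v.map_le_add hx hy
  zero_mem' := by simp
  smul_mem' r x hx := by
    rw [Set.mem_ofPred_eq, Algebra.smul_def, v.map_mul]
    exact le_add_of_nonneg_of_le (hv r) hx

@[simp]
theorem AddValuation.mem_geSubmodule {hv : ∀ r : R, 0 ≤ v (algebraMap R K r)} {c : WithTop ℤ}
    {x : K} : x ∈ v.geSubmodule hv c ↔ c ≤ v x :=
  Iff.rfl

variable {v}

theorem sup_inf_geSubmodule_lt (hv : ∀ r : R, 0 ≤ v (algebraMap R K r)) {I J : Submodule R K}
    {a b : WithTop ℤ} (ha : a ∈ vvals v I \ vvals v J) (hab : a < b) :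
    J ⊔ (I ⊓ v.geSubmodule hv b) < J ⊔ (I ⊓ v.geSubmodule hv a) := by
  obtain ⟨⟨x, ⟨hxI, hx0⟩, rfl⟩, hxJ⟩ := ha
  refine SetLike.lt_iff_le_and_exists.mpr
    ⟨?_, x, mem_sup_right ⟨hxI, v.mem_geSubmodule.mpr le_rfl⟩, ?_⟩
  · exact sup_le_sup_left (inf_le_inf_left _ fun y hy ↦ hab.le.trans hy) _
  · intro hx
    obtain ⟨y, hyJ, z, ⟨-, hz⟩, hyz⟩ := mem_sup.mp hx
    have hvy : v y = v x := by
      rw [eq_sub_of_add_eq hyz, v.map_sub_eq_of_lt_left (hab.trans_le hz)]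
    exact hxJ ⟨y, ⟨hyJ, fun hy0 ↦ hx0 (v.top_iff.mp (hvy ▸ hy0 ▸ v.map_zero))⟩, hvy⟩

theorem ncard_vvals_sdiff_le_krullDim_Icc (hv : ∀ r : R, 0 ≤ v (algebraMap R K r))
    {I J : Submodule R K} (hJI : J ≤ I) (hD : (vvals v I \ vvals v J).Finite) :
    ((vvals v I \ vvals v J).ncard : WithBot ℕ∞) ≤ Order.krullDim (Set.Icc J I) := by
  have hcard : (insert ⊤ hD.toFinset).card = (vvals v I \ vvals v J).ncard + 1 := by
    rw [Finset.card_insert_of_notMem fun h ↦ top_notMem_vvals v I (hD.mem_toFinset.mp h).1,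
      Set.ncard_eq_toFinset_card _ hD]
  refine Order.le_krullDim_of_strictAntiOn hcard
    (f := fun c ↦ ⟨J ⊔ (I ⊓ v.geSubmodule hv c), le_sup_left, sup_le hJI inf_le_left⟩) ?_
  intro a ha b _ hab
  have ha' : a ∈ vvals v I \ vvals v J := by
    simpa [hab.ne_top] using ha
  exact sup_inf_geSubmodule_lt hv ha' hab

end Valuation

section Discrete

variable {R K : Type*} [CommRing R] [Field K] [Algebra R K] {v : AddValuation K (WithTop ℤ)}

-- `R` maps onto the residue field of `v`.
variable (R) in
def ResiduallyRational (v : AddValuation K (WithTop ℤ)) : Prop :=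
  ∀ u : K, v u = 0 → ∃ a : R, 0 < v (u - algebraMap R K a)

theorem residuallyRational_of_integralClosure [IsLocalRing (integralClosure R K)]
    (hres : ∀ y : integralClosure R K, ∃ a : R,
      y - algebraMap R (integralClosure R K) a ∈ maximalIdeal (integralClosure R K))
    (hvRbar : ∀ y : K, y ∈ integralClosure R K ↔ 0 ≤ v y) : ResiduallyRational R v := by
  intro u hu
  obtain ⟨a, ha⟩ := hres ⟨u, (hvRbar u).mpr hu.ge⟩
  set d := (⟨u, (hvRbar u).mpr hu.ge⟩ - algebraMap R (integralClosure R K) a :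
    integralClosure R K)
  refine ⟨a, lt_of_le_of_ne ((hvRbar d).mp d.2) fun hd ↦ (mem_maximalIdeal _).mp ha ?_⟩
  replace hd : v d = 0 := hd.symm
  have hd0 : (d : K) ≠ 0 := v.ne_top_iff.mp (hd ▸ WithTop.zero_ne_top)
  have hdinv : (d : K)⁻¹ ∈ integralClosure R K := (hvRbar _).mpr (by
    rw [v.map_inv, hd, neg_zero])
  exact .of_mul_eq_one ⟨_, hdinv⟩ (Subtype.ext (mul_inv_cancel₀ hd0))

theorem exists_lt_val_sub_smul (hres : ResiduallyRational R v) {x y : K} (hy : y ≠ 0)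
    (h : v x = v y) : ∃ a : R, v x < v (x - a • y) := by
  have hvy : v y ≠ ⊤ := v.ne_top_iff.mpr hy
  obtain ⟨a, ha⟩ := hres (x / y) (by
    rw [v.map_div, h, LinearOrderedAddCommGroupWithTop.sub_self_eq_zero_iff_ne_top.mpr hvy])
  refine ⟨a, ?_⟩
  have hxy : x - a • y = (x / y - algebraMap R K a) * y := by
    rw [Algebra.smul_def]; field_simp
  rw [hxy, v.map_mul, h]
  simpa using WithTop.add_lt_add_right hvy ha

theorem le_of_vvals_subset (hres : ResiduallyRational R v) {M₁ M₂ : Submodule R K} {s : ℤ}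
    (htail : ∀ x, (s : WithTop ℤ) ≤ v x → x ∈ M₁) (hle : M₁ ≤ M₂)
    (hsub : vvals v M₂ ⊆ vvals v M₁) : M₂ ≤ M₁ := by
  suffices key : ∀ k : ℕ, ∀ x ∈ M₂, ∀ n : ℤ, v x = n → s ≤ n + k → x ∈ M₁ by
    intro x hx
    rcases eq_or_ne x 0 with rfl | hx0
    · exact M₁.zero_mem
    obtain ⟨n, hn⟩ := WithTop.ne_top_iff_exists.mp (v.ne_top_iff.mpr hx0)
    exact key (s - n).toNat x hx n hn.symm (by omega)
  intro k
  induction k with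
  | zero =>
    intro x _ n hn hs
    exact htail x (by rw [hn]; exact_mod_cast (by omega : s ≤ n))
  | succ k ih =>
    intro x hx n hn hs
    rcases eq_or_ne x 0 with rfl | hx0
    · exact M₁.zero_mem
    obtain ⟨y, ⟨hy, hy0⟩, hvy⟩ := hsub ⟨x, ⟨hx, hx0⟩, rfl⟩
    obtain ⟨a, ha⟩ := exists_lt_val_sub_smul hres hy0 hvy.symm
    have hsub_mem : x - a • y ∈ M₁ := by
      rcases eq_or_ne (x - a • y) 0 with h0 | h0
      · exact h0 ▸ M₁.zero_mem
      obtain ⟨n', hn'⟩ := WithTop.ne_top_iff_exists.mp (v.ne_top_iff.mpr h0)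
      have hnn' : n < n' := by rw [hn, ← hn'] at ha; exact_mod_cast ha
      exact ih _ (sub_mem hx (hle (M₁.smul_mem a hy))) n' hn'.symm (by omega)
    simpa using add_mem hsub_mem (M₁.smul_mem a hy)

theorem vvals_ssubset_of_lt (hres : ResiduallyRational R v) {M₁ M₂ : Submodule R K} {s : ℤ}
    (htail : ∀ x, (s : WithTop ℤ) ≤ v x → x ∈ M₁) (h : M₁ < M₂) : vvals v M₁ ⊂ vvals v M₂ :=
  (vvals_mono v h.le).ssubset_of_not_subset fun hsub ↦
    h.not_ge (le_of_vvals_subset hres htail h.le hsub)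

theorem krullDim_Icc_le_ncard_vvals_sdiff (hres : ResiduallyRational R v)
    {I J : Submodule R K} {s : ℤ} (htail : ∀ x, (s : WithTop ℤ) ≤ v x → x ∈ J)
    (hD : (vvals v I \ vvals v J).Finite) :
    Order.krullDim (Set.Icc J I) ≤ (vvals v I \ vvals v J).ncard := by
  refine Order.krullDim_le_of_strictMono_nat
    (f := fun M : Set.Icc J I ↦ (vvals v M \ vvals v J).ncard) (fun M₁ M₂ h ↦ ?_)
    fun M ↦ Set.ncard_le_ncard (Set.sdiff_subset_sdiff_left (vvals_mono v M.2.2)) hD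
  refine Set.ncard_lt_ncard (sdiff_lt_sdiff_right ?_ (vvals_mono v M₁.2.1))
    (hD.subset (Set.sdiff_subset_sdiff_left (vvals_mono v M₂.2.2)))
  exact vvals_ssubset_of_lt hres (fun x hx ↦ M₁.2.1 (htail x hx)) h

end Discrete

section FractionalIdeal

variable {R K : Type*} [CommRing R] [Field K] [Algebra R K] [IsFractionRing R K]
  {v : AddValuation K (WithTop ℤ)}

theorem exists_le_val_of_fg (hv : ∀ r : R, 0 ≤ v (algebraMap R K r)) {I : Submodule R K}
    (hI : I.FG) : ∃ lo : ℤ, ∀ x ∈ I, (lo : WithTop ℤ) ≤ v x := by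
  obtain ⟨a, ha, hint⟩ := FractionalIdeal.isFractional_of_fg (S := nonZeroDivisors R) hI
  obtain ⟨m, hm⟩ := WithTop.ne_top_iff_exists.mp
    (v.ne_top_iff.mpr (IsLocalization.map_units K ⟨a, ha⟩).ne_zero)
  refine ⟨-m, fun x hx ↦ ?_⟩
  obtain ⟨r, hr⟩ := hint x hx
  have hax : 0 ≤ (m : WithTop ℤ) + v x := by
    rw [hm, ← v.map_mul, ← Algebra.smul_def, ← hr]
    exact hv r
  cases h : v x with
  | top => exact le_top
  | coe n =>
    rw [h] at hax
    exact_mod_cast (by norm_cast at hax; omega : -m ≤ n)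

theorem exists_mem_of_le_val [Module.Finite R (integralClosure R K)]
    (hvRbar : ∀ y : K, y ∈ integralClosure R K ↔ 0 ≤ v y) {J : Submodule R K} (hJ : J ≠ ⊥) :
    ∃ s : ℤ, ∀ x, (s : WithTop ℤ) ≤ v x → x ∈ J := by
  obtain ⟨a, ha, hint⟩ := FractionalIdeal.isFractional_of_fg (S := nonZeroDivisors R)
    (Module.Finite.iff_fg.mp inferInstance :
      (Subalgebra.toSubmodule (integralClosure R K)).FG)
  obtain ⟨j, hj, hj0⟩ := exists_mem_ne_zero_of_ne_bot hJ
  have ha0 : algebraMap R K a ≠ 0 := (IsLocalization.map_units K ⟨a, ha⟩).ne_zero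
  have hj' : algebraMap R K a * j ≠ 0 := mul_ne_zero ha0 hj0
  obtain ⟨s, hs⟩ := WithTop.ne_top_iff_exists.mp (v.ne_top_iff.mpr hj')
  refine ⟨s, fun x hx ↦ ?_⟩
  have hb : x / (algebraMap R K a * j) ∈ integralClosure R K := by
    refine (hvRbar _).mpr ((WithTop.add_le_add_iff_right (WithTop.coe_ne_top (a := s))).mp ?_)
    rw [zero_add, hs, ← v.map_mul, div_mul_cancel₀ _ hj']
    exact hs ▸ hx
  obtain ⟨r, hr⟩ := hint _ hb
  have hx : x = r • j := by
    rw [Algebra.smul_def, hr, Algebra.smul_def]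
    field_simp
  exact hx ▸ J.smul_mem r hj

end FractionalIdeal

theorem vvals_sdiff_finite {R K : Type*} [CommRing R] [Field K] [Algebra R K]
    {v : AddValuation K (WithTop ℤ)} {I J : Submodule R K} {lo s : ℤ}
    (hlo : ∀ x ∈ I, (lo : WithTop ℤ) ≤ v x) (htail : ∀ x, (s : WithTop ℤ) ≤ v x → x ∈ J) :
    (vvals v I \ vvals v J).Finite := by
  refine ((Set.finite_Ico lo s).image (↑)).subset ?_
  rintro _ ⟨⟨x, ⟨hxI, hx0⟩, rfl⟩, hxJ⟩
  obtain ⟨n, hn⟩ := WithTop.ne_top_iff_exists.mp (v.ne_top_iff.mpr hx0)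
  refine ⟨n, ⟨?_, ?_⟩, hn⟩
  · exact_mod_cast hn ▸ hlo x hxI
  · by_contra h
    exact hxJ ⟨x, ⟨htail x (hn ▸ by exact_mod_cast not_lt.mp h), hx0⟩, rfl⟩

theorem stmt_0_general
    (R : Type*) [CommRing R]
    (K : Type*) [Field K] [Algebra R K] [IsFractionRing R K]
    [IsDiscreteValuationRing (integralClosure R K)]
    [Module.Finite R (integralClosure R K)]
    (hres : ∀ y : integralClosure R K, ∃ a : R,
      y - algebraMap R (integralClosure R K) a ∈ maximalIdeal (integralClosure R K))
    (v : K → WithTop ℤ) (hv0 : ∀ y : K, v y = ⊤ ↔ y = 0)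
    (hvmul : ∀ y z : K, v (y * z) = v y + v z)
    (hvadd : ∀ y z : K, min (v y) (v z) ≤ v (y + z))
    (hvRbar : ∀ y : K, y ∈ integralClosure R K ↔ 0 ≤ v y)
    (I J : Submodule R K) (hJI : J ≤ I) (hIfg : I.FG) (hJ0 : J ≠ ⊥) :
    qlen R I J = ((vvals v I \ vvals v J).encard : WithBot ℕ∞) := by
  have hv1 : v 1 = 0 := by
    have h := hvmul 1 1
    rw [one_mul] at h
    obtain ⟨n, hn⟩ := WithTop.ne_top_iff_exists.mp (mt (hv0 1).mp one_ne_zero)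
    rw [← hn] at h ⊢
    exact_mod_cast (by norm_cast at h; omega : n = 0)
  let w := AddValuation.of v ((hv0 0).mpr rfl) hv1 hvadd hvmul
  have hwR : ∀ r : R, 0 ≤ w (algebraMap R K r) :=
    fun r ↦ (hvRbar _).mp ((integralClosure R K).algebraMap_mem r)
  obtain ⟨lo, hlo⟩ := exists_le_val_of_fg hwR hIfg
  obtain ⟨s, htail⟩ := exists_mem_of_le_val (v := w) hvRbar hJ0
  have hD : (vvals w I \ vvals w J).Finite := vvals_sdiff_finite hlo htail
  change _ = ((vvals w I \ vvals w J).encard : WithBot ℕ∞)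
  rw [qlen_eq_krullDim_Icc hJI, ← hD.cast_ncard_eq]
  exact le_antisymm
    (krullDim_Icc_le_ncard_vvals_sdiff (residuallyRational_of_integralClosure hres hvRbar) htail hD)
    (ncard_vvals_sdiff_le_krullDim_Icc hwR hJI hD)

theorem stmt_0
    (R : Type*) [CommRing R] [IsDomain R] [IsLocalRing R] [IsNoetherianRing R]
    (K : Type*) [Field K] [Algebra R K] [IsFractionRing R K]
    [IsDiscreteValuationRing (integralClosure R K)]
    [Module.Finite R (integralClosure R K)]
    (hres : ∀ y : integralClosure R K, ∃ a : R,
      y - algebraMap R (integralClosure R K) a ∈ maximalIdeal (integralClosure R K))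
    (hkinf : Infinite (ResidueField R))
    (v : K → WithTop ℤ) (hv0 : ∀ y : K, v y = ⊤ ↔ y = 0)
    (hvmul : ∀ y z : K, v (y * z) = v y + v z)
    (hvadd : ∀ y z : K, min (v y) (v z) ≤ v (y + z))
    (t : K) (ht : t ∈ integralClosure R K) (hvt : v t = 1)
    (hvRbar : ∀ y : K, y ∈ integralClosure R K ↔ 0 ≤ v y)
    (I J : Submodule R K) (hJI : J ≤ I) (hIfg : I.FG) (hJfg : J.FG) (hJ0 : J ≠ ⊥) :
    qlen R I J = ((vvals v I \ vvals v J).encard : WithBot ℕ∞) :=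
  stmt_0_general R K hres v hv0 hvmul hvadd hvRbar I J hJI hIfg hJ0
end
end

section
/- With ν the reduction exponent of I (the least n with I^{n+1} = xI^n for all subsequent powers), one has I^ν ⊆ R : Λ, and if R : Λ = I^n for some n, then n = ν. -/
open Submodule IsLocalRing

noncomputable section

/-!
Since `Iᵏ⁺¹ = x Iᵏ` for `k ≥ ν`, every `Iᵏ` with `k ≥ ν` is `xᵏ⁻ᵛ Iᵛ`, so the increasing chain
`Iⁿ : Iⁿ` becomes stationary at `Λ = Iᵛ : Iᵛ`, and `Λ Iᵛ ⊆ Iᵛ ⊆ R`. Suppose `R : Λ = Iᵐ`. Then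
`Iᵛ ⊆ Iᵐ`, and Nakayama forces `m ≤ ν`. On the other hand `x⁻ᵛ Iᵛ ⊆ Λ` (as `I²ᵛ = xᵛ Iᵛ`) and
`R : Λ` is a `Λ`-module containing `xᵐ`, so `xᵐ⁻ᵛ Iᵛ ⊆ Iᵐ`. For `m < ν` this gives
`Iᵛ = x Iᵛ⁻¹`, contradicting the minimality of `ν`.
-/

namespace Submodule

variable {R A : Type*} [CommSemiring R] [CommSemiring A] [Algebra R A]

theorem div_mul_le (M N : Submodule R A) : M / N * N ≤ M :=
  le_div_iff_mul_le.mp le_rfl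

theorem span_singleton_mul_span_singleton (a b : A) :
    span R {a} * span R {b} = span R {a * b} := by
  rw [span_mul_span, Set.singleton_mul_singleton]

theorem div_self_le_mul_div_mul_self (M N : Submodule R A) : M / M ≤ M * N / (M * N) := by
  rw [le_div_iff_mul_le, ← mul_assoc]
  exact mul_le_mul_left (div_mul_le M M) N

theorem div_self_mul_div_self_le (M : Submodule R A) : M / M * (M / M) ≤ M / M := by
  rw [le_div_iff_mul_le, mul_assoc]
  exact (mul_le_mul_right (div_mul_le M M) _).trans (div_mul_le M M)

theorem div_mul_le_div_of_mul_le {N L : Submodule R A} (hL : L * L ≤ L) : N / L * L ≤ N / L := by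
  rw [le_div_iff_mul_le, mul_assoc]
  exact (mul_le_mul_right hL _).trans (div_mul_le N L)

theorem le_one_div_div_self {M : Submodule R A} (hM : M ≤ 1) : M ≤ 1 / (M / M) := by
  rw [le_div_iff_mul_le, mul_comm]
  exact (div_mul_le M M).trans hM

theorem span_singleton_mul_div_self {u : A} (hu : IsUnit u) (M : Submodule R A) :
    span R {u} * M / (span R {u} * M) = M / M := by
  refine le_antisymm ?_ (by rw [mul_comm (span R {u})]; exact div_self_le_mul_div_mul_self M _)
  obtain ⟨w, hw⟩ := hu.exists_left_inv
  have hM : span R {u} * M * span R {w} = M := by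
    rw [mul_comm, ← mul_assoc, span_singleton_mul_span_singleton, hw, ← one_eq_span, one_mul]
  simpa only [hM] using div_self_le_mul_div_mul_self (span R {u} * M) (span R {w})

theorem iSup_pow_div_pow_eq_of_stable {M : Submodule R A} {u : A} (hu : IsUnit u) {ν : ℕ}
    (h : ∀ n, M ^ (ν + n) = span R {u ^ n} * M ^ ν) : ⨆ n, M ^ n / M ^ n = M ^ ν / M ^ ν := by
  refine le_antisymm (iSup_le fun n => ?_) (le_iSup (fun n => M ^ n / M ^ n) ν)
  calc M ^ n / M ^ n ≤ M ^ n * M ^ ν / (M ^ n * M ^ ν) := div_self_le_mul_div_mul_self _ _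
    _ = M ^ ν / M ^ ν := by rw [← pow_add, add_comm, h, span_singleton_mul_div_self (hu.pow n)]

theorem pow_le_span_mul_pow_of_one_div_eq {K : Type*} [Field K] [Algebra R K]
    {M : Submodule R K} {y : K} (hyM : y ∈ M) (hy : y ≠ 0) {ν m : ℕ}
    (hsq : M ^ (ν + ν) = span R {y ^ ν} * M ^ ν) (hm : 1 / (M ^ ν / M ^ ν) = M ^ m)
    (hmν : m ≤ ν) : M ^ ν ≤ span R {y ^ (ν - m)} * M ^ m := by
  have hΛ : span R {y⁻¹ ^ ν} * M ^ ν ≤ M ^ ν / M ^ ν := by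
    rw [le_div_iff_mul_le, mul_assoc, ← pow_add, hsq, ← mul_assoc,
      span_singleton_mul_span_singleton, ← mul_pow, inv_mul_cancel₀ hy, one_pow, ← one_eq_span,
      one_mul]
  have hym : span R {y ^ m} ≤ M ^ m := span_le.mpr (by simpa using Submodule.pow_mem_pow M hyM m)
  have hunit : y ^ (ν - m) * y ^ m * y⁻¹ ^ ν = 1 := by
    rw [← pow_add, Nat.sub_add_cancel hmν, ← mul_pow, mul_inv_cancel₀ hy, one_pow]
  calc M ^ ν = span R {y ^ (ν - m)} * (span R {y ^ m} * (span R {y⁻¹ ^ ν} * M ^ ν)) := by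
        rw [← mul_assoc, ← mul_assoc, span_singleton_mul_span_singleton,
          span_singleton_mul_span_singleton, hunit, ← one_eq_span, one_mul]
    _ ≤ span R {y ^ (ν - m)} * (M ^ m * (M ^ ν / M ^ ν)) := by gcongr
    _ ≤ span R {y ^ (ν - m)} * M ^ m := by
        rw [← hm]
        gcongr
        exact div_mul_le_div_of_mul_le (div_self_mul_div_self_le _)

end Submodule

namespace Ideal

theorem pow_add_eq_span_pow_mul {R : Type*} [CommSemiring R] {I : Ideal R} {x : R} {ν : ℕ}
    (h : ∀ k ≥ ν, I ^ (k + 1) = span {x} * I ^ k) (n : ℕ) :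
    I ^ (ν + n) = span {x ^ n} * I ^ ν := by
  induction n with
  | zero => simp
  | succ n ih =>
    rw [← add_assoc, h _ (Nat.le_add_right ν n), ih, ← mul_assoc, span_singleton_mul_span_singleton,
      pow_succ']

theorem pow_eq_span_mul_pow_pred {R : Type*} [CommSemiring R] {I : Ideal R} {x : R} (hx : x ∈ I)
    {m n : ℕ} (hmn : m < n) (h : I ^ n ≤ span {x ^ (n - m)} * I ^ m) :
    I ^ n = span {x} * I ^ (n - 1) := by
  obtain ⟨d, rfl⟩ : ∃ d, n = m + d + 1 := ⟨n - m - 1, by omega⟩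
  rw [show m + d + 1 - m = d + 1 by omega] at h
  rw [Nat.add_sub_cancel]
  have hxI : span {x} ≤ I := (span_singleton_le_iff_mem I).mpr hx
  refine le_antisymm ?_ ?_
  · calc I ^ (m + d + 1) ≤ span {x ^ (d + 1)} * I ^ m := h
      _ = span {x} * (span {x ^ d} * I ^ m) := by
        rw [← mul_assoc, span_singleton_mul_span_singleton, pow_succ']
      _ ≤ span {x} * (I ^ d * I ^ m) := by
        gcongr
        simpa [span_singleton_pow] using pow_right_mono hxI d
      _ = span {x} * I ^ (m + d) := by rw [← pow_add, add_comm d]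
  · calc span {x} * I ^ (m + d) ≤ I * I ^ (m + d) := mul_mono_left hxI
      _ = I ^ (m + d + 1) := (pow_succ' I _).symm

theorem pow_right_strictAnti_of_isLocalRing {R : Type*} [CommRing R] [IsDomain R] [IsLocalRing R]
    [IsNoetherianRing R] (I : Ideal R) (hI0 : I ≠ ⊥) (hI1 : I ≠ ⊤) :
    StrictAnti (I ^ · : ℕ → Ideal R) := by
  refine strictAnti_nat_of_succ_lt fun n => lt_of_le_of_ne (pow_le_pow_right n.le_succ) fun h => ?_
  have hle : I ^ n ≤ I • I ^ n := by rw [smul_eq_mul, ← pow_succ', h]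
  exact pow_ne_zero n hI0 (eq_bot_of_le_smul_of_le_jacobson_bot I _ (IsNoetherian.noetherian _) hle
    ((le_maximalIdeal hI1).trans (jacobson_eq_maximalIdeal ⊥ bot_ne_top).ge))

end Ideal

section FractionalIdeals

variable {R K : Type*} [CommRing R] [CommRing K] [Algebra R K]

theorem idl_mul (I J : Ideal R) : idl R K (I * J) = idl R K I * idl R K J :=
  Submodule.map_mul I J (Algebra.ofId R K)

theorem idl_pow (I : Ideal R) (n : ℕ) : idl R K (I ^ n) = idl R K I ^ n :=
  Submodule.map_pow I (Algebra.ofId R K) n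

theorem idl_le_one (I : Ideal R) : idl R K I ≤ 1 := by
  rw [one_eq_range]
  exact LinearMap.map_le_range

theorem idl_span_singleton_mul (y : R) (J : Ideal R) :
    idl R K (Ideal.span {y} * J) = span R {algebraMap R K y} * idl R K J := by
  rw [idl_mul, idl, Ideal.span, map_span, Set.image_singleton]
  rfl

theorem idl_le_idl_iff (hinj : Function.Injective (algebraMap R K)) {I J : Ideal R} :
    idl R K I ≤ idl R K J ↔ I ≤ J :=
  map_le_map_iff_of_injective hinj I J

end FractionalIdeals

theorem stmt_2_general
    (R : Type*) [CommRing R] [IsDomain R] [IsLocalRing R] [IsNoetherianRing R]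
    (K : Type*) [Field K] [Algebra R K] [IsFractionRing R K]
    (I : Ideal R)
    (hInp : ¬ I.IsPrincipal)
    (x : R) (hxI : x ∈ I)
    (ν : ℕ) (hν : IsLeast {n : ℕ | ∀ k ≥ n, I ^ (k + 1) = Ideal.span {x} * I ^ k} ν) :
    (idl R K I) ^ ν ≤ (1 : Submodule R K) / (blowup R K I) ∧
      ∀ m : ℕ, (1 : Submodule R K) / (blowup R K I) = (idl R K I) ^ m → m = ν := by
  have hI0 : I ≠ ⊥ := fun h => hInp (h ▸ bot_isPrincipal)
  have hI1 : I ≠ ⊤ := fun h => hInp (h ▸ top_isPrincipal)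
  have hinj := IsFractionRing.injective R K
  have hx0 : x ≠ 0 := by
    rintro rfl
    exact pow_ne_zero (ν + 1) hI0 (by simpa using hν.1 ν le_rfl)
  have hy0 : algebraMap R K x ≠ 0 := (map_ne_zero_iff _ hinj).mpr hx0
  have hstable (n : ℕ) : idl R K I ^ (ν + n) = span R {algebraMap R K x ^ n} * idl R K I ^ ν := by
    rw [← idl_pow, ← idl_pow, Ideal.pow_add_eq_span_pow_mul hν.1, idl_span_singleton_mul,
      _root_.map_pow]
  have hΛ : blowup R K I = idl R K I ^ ν / idl R K I ^ ν :=
    iSup_pow_div_pow_eq_of_stable (Ne.isUnit hy0) hstable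
  have hle : idl R K I ^ ν ≤ 1 / blowup R K I :=
    hΛ ▸ le_one_div_div_self (pow_le_one' (idl_le_one I) ν)
  refine ⟨hle, fun m hm => ?_⟩
  have hmν : m ≤ ν := by
    refine (Ideal.pow_right_strictAnti_of_isLocalRing I hI0 hI1).le_iff_ge.mp ?_
    rw [← idl_le_idl_iff hinj, idl_pow, idl_pow, ← hm]
    exact hle
  by_contra hne
  have hK := pow_le_span_mul_pow_of_one_div_eq (y := algebraMap R K x)
    (Submodule.mem_map_of_mem hxI) hy0 (hstable ν) (hΛ ▸ hm) hmν
  rw [← _root_.map_pow, ← idl_pow, ← idl_pow, ← idl_span_singleton_mul, idl_le_idl_iff hinj] at hK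
  have hpred := Ideal.pow_eq_span_mul_pow_pred hxI (lt_of_le_of_ne hmν hne) hK
  have : ν ≤ ν - 1 := hν.2 fun k hk => by
    rcases hk.eq_or_lt with rfl | hk
    · rwa [Nat.sub_add_cancel (by omega)]
    · exact hν.1 k (by omega)
  omega

theorem stmt_2
    (R : Type*) [CommRing R] [IsDomain R] [IsLocalRing R] [IsNoetherianRing R]
    (K : Type*) [Field K] [Algebra R K] [IsFractionRing R K]
    [IsDiscreteValuationRing (integralClosure R K)]
    [Module.Finite R (integralClosure R K)]
    (hres : ∀ y : integralClosure R K, ∃ a : R,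
      y - algebraMap R (integralClosure R K) a ∈ maximalIdeal (integralClosure R K))
    (hkinf : Infinite (ResidueField R))
    (I : Ideal R) (hI0 : I ≠ ⊥) (hIrad : I.radical = maximalIdeal R)
    (hInp : ¬ I.IsPrincipal)
    (x : R) (hxI : x ∈ I)
    (ν : ℕ) (hν : IsLeast {n : ℕ | ∀ k ≥ n, I ^ (k + 1) = Ideal.span {x} * I ^ k} ν) :
    (idl R K I) ^ ν ≤ (1 : Submodule R K) / (blowup R K I) ∧
      ∀ m : ℕ, (1 : Submodule R K) / (blowup R K I) = (idl R K I) ^ m → m = ν :=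
  stmt_2_general R K I hInp x hxI ν hν
end
end

section
/- With ρ = length_R(Λ/R) the genus of I, e the multiplicity, ν the reduction exponent, δ = length_R(R̄/R) and c the conductor of v(R), one has 2ρ = eν + (2δ − c) − length_R(R:Λ / I^ν) − length_R(ωΛ/Λ), where ω is a canonical module of R with R ⊆ ω ⊂ R̄. -/
/-!
Write `ℓ(A/B)` for the length of `A ⧸ B` (fractional ideals `B ⊆ A`); it is additive along chains.
As `x` generates a reduction of `I` with reduction exponent `ν`, `Λ = I^ν : I^ν` and
`I^ν = x^ν Λ`, so `ℓ(Λ/I^ν) = ν e`, and the chain `I^ν ⊆ R:Λ ⊆ R ⊆ Λ` gives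
`ν e = ℓ₁ + ℓ(R/(R:Λ)) + ρ`. Since `J ↦ ω:J` is an inclusion-reversing involution,
`ℓ(R/(R:Λ)) = ℓ(ωΛ/ω)`; computing `ℓ(ωΛ/R)` along `R ⊆ Λ ⊆ ωΛ` and along `R ⊆ ω ⊆ ωΛ` gives
`ρ + ℓ₂ = ℓ(ω/R) + ℓ(ωΛ/ω)`. The same computation for `R̄`, where `ωR̄ = R̄`, gives
`δ = ℓ(ω/R) + ℓ(R/𝔠)` with `𝔠 = R:R̄`, while `c = ℓ(R/𝔠) + δ`. Eliminating the three
auxiliary lengths gives the formula.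
-/

open Submodule IsLocalRing

noncomputable section

open Order

def quotLength (R : Type*) [CommRing R] {M : Type*} [AddCommGroup M] [Module R M]
    (A B : Submodule R M) : ℕ∞ :=
  Module.length R (A ⧸ B.comap A.subtype)

section Length

variable {R M : Type*} [CommRing R] [AddCommGroup M] [Module R M]

lemma natCast_eq_modLength_iff {n : ℕ} :
    (n : WithBot ℕ∞) = modLength R M ↔ (n : ℕ∞) = Module.length R M := by
  rw [modLength, ← Module.coe_length, ← WithBot.coe_natCast, WithBot.coe_inj]

lemma natCast_eq_qlen_iff {n : ℕ} {A B : Submodule R M} :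
    (n : WithBot ℕ∞) = qlen R A B ↔ (n : ℕ∞) = quotLength R A B :=
  natCast_eq_modLength_iff

lemma quotLength_self (A : Submodule R M) : quotLength R A A = 0 := by
  rw [quotLength, comap_subtype_self]
  exact Module.length_eq_zero

lemma quotLength_add {A B C : Submodule R M} (hCB : C ≤ B) (hBA : B ≤ A) :
    quotLength R A C = quotLength R B C + quotLength R A B := by
  refine Module.length_eq_add_of_exact
    (mapQ _ _ (inclusion hBA)
      (by rw [← comap_comp, subtype_comp_inclusion]))
    (factor (comap_mono hCB)) ?_ (factor_surjective _) ?_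
  · refine (injective_iff_map_eq_zero _).2 fun y hy => ?_
    induction y using Submodule.Quotient.induction_on
    rw [mapQ_apply, Submodule.Quotient.mk_eq_zero] at hy
    exact (Submodule.Quotient.mk_eq_zero _).2 hy
  · intro y
    induction y using Submodule.Quotient.induction_on with | _ a
    change factor _ (mkQ _ a) = 0 ↔ _
    rw [factor_mk, mkQ_apply, Submodule.Quotient.mk_eq_zero,
      mem_comap, Set.mem_range]
    constructor
    · intro ha
      exact ⟨Submodule.Quotient.mk ⟨a, ha⟩, rfl⟩
    · rintro ⟨y, hy⟩
      induction y using Submodule.Quotient.induction_on with | _ b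
      rw [mapQ_apply, Submodule.Quotient.eq, mem_comap] at hy
      simpa using B.sub_mem b.2 (hCB hy)

lemma coe_quotLength_eq_krullDim_Icc {A B : Submodule R M} (h : B ≤ A) :
    (quotLength R A B : WithBot ℕ∞) = krullDim (Set.Icc B A) := by
  rw [quotLength, Module.coe_length]
  exact krullDim_eq_of_orderIso ((comapMkQRelIso _).trans
    { toFun q := ⟨q.1.map A.subtype, by
        simpa [map_comap_subtype, inf_eq_right.2 h] using
          map_mono (f := A.subtype) q.2,
        A.map_subtype_le q.1⟩
      invFun D := ⟨D.1.comap A.subtype, comap_mono D.2.1⟩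
      left_inv q := Subtype.ext (comap_map_eq_of_injective A.injective_subtype _)
      right_inv D := Subtype.ext (by simp [map_comap_subtype, inf_eq_right.2 D.2.2])
      map_rel_iff' := map_le_map_iff_of_injective A.injective_subtype _ _ })

lemma quotLength_eq_of_orderIso {A B A' B' : Submodule R M} (h : B ≤ A) (h' : B' ≤ A')
    (f : Set.Icc B A ≃o Set.Icc B' A') : quotLength R A B = quotLength R A' B' := by
  rw [← WithBot.coe_inj, coe_quotLength_eq_krullDim_Icc h, coe_quotLength_eq_krullDim_Icc h',
    krullDim_eq_of_orderIso f]

lemma quotLength_eq_of_orderIso_dual {A B A' B' : Submodule R M} (h : B ≤ A) (h' : B' ≤ A')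
    (f : Set.Icc B A ≃o (Set.Icc B' A')ᵒᵈ) : quotLength R A B = quotLength R A' B' := by
  rw [← WithBot.coe_inj, coe_quotLength_eq_krullDim_Icc h, coe_quotLength_eq_krullDim_Icc h',
    krullDim_eq_of_orderIso f, krullDim_orderDual]

end Length

namespace Submodule

variable {R K : Type*} [CommRing R] [Field K] [Algebra R K]

lemma span_singleton_mul_le_span_singleton_mul_iff {u : K} (hu : u ≠ 0) {A B : Submodule R K} :
    span R {u} * A ≤ span R {u} * B ↔ A ≤ B := by
  refine ⟨fun h z hz => ?_, fun h => mul_le_mul_right h _⟩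
  have huz : u * z ∈ span R {u} * B := h (mem_span_singleton_mul.2 ⟨z, hz, rfl⟩)
  rw [span_singleton_mul, mem_smul_iff_inv_mul_mem hu, inv_mul_cancel_left₀ hu] at huz
  exact huz

lemma span_singleton_mul_span_singleton_inv_mul {u : K} (hu : u ≠ 0) (A : Submodule R K) :
    span R {u} * (span R {u⁻¹} * A) = A := by
  rw [← mul_assoc, span_mul_span, Set.singleton_mul_singleton, mul_inv_cancel₀ hu,
    ← one_eq_span, one_mul]

lemma div_le_div_left (ω : Submodule R K) {A B : Submodule R K} (h : A ≤ B) : ω / B ≤ ω / A :=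
  fun _ hz y hy => hz y (h hy)

protected lemma div_one (ω : Submodule R K) : ω / 1 = ω :=
  le_antisymm (fun z hz => by simpa using hz 1 (one_le.1 le_rfl))
    (le_div_iff_mul_le.2 (mul_one ω).le)

lemma one_div_le_one {T : Submodule R K} (h : 1 ≤ T) : 1 / T ≤ 1 :=
  (div_le_div_left 1 h).trans (Submodule.div_one 1).le

lemma one_div_eq_div_mul {ω : Submodule R K} (hωω : ω / ω = 1) (T : Submodule R K) :
    1 / T = ω / (ω * T) := by
  ext z
  rw [← span_singleton_le_iff_mem, ← span_singleton_le_iff_mem, le_div_iff_mul_le,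
    le_div_iff_mul_le, ← hωω, le_div_iff_mul_le, mul_assoc, mul_comm T ω]

lemma div_self_le_mul_div_self (B C : Submodule R K) : B / B ≤ (C * B) / (C * B) := by
  rw [le_div_iff_mul_le, mul_left_comm]
  exact mul_le_mul_right (le_div_iff_mul_le.1 le_rfl) C

lemma div_self_span_singleton_mul {w : K} (hw : w ≠ 0) (B : Submodule R K) :
    (span R {w} * B) / (span R {w} * B) = B / B := by
  refine le_antisymm ?_ (div_self_le_mul_div_self B _)
  rw [le_div_iff_mul_le, ← span_singleton_mul_le_span_singleton_mul_iff hw, mul_left_comm]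
  exact le_div_iff_mul_le.1 le_rfl

lemma eq_span_singleton_mul_div_self {N : Submodule R K} {v : K} (hv : v ≠ 0) (hvN : v ∈ N)
    (h : N * N = span R {v} * N) : N = span R {v} * (N / N) := by
  refine le_antisymm ?_ ?_
  · have hD : span R {v⁻¹} * N ≤ N / N := by
      have hcancel := span_singleton_mul_span_singleton_inv_mul (inv_ne_zero hv) N
      rw [inv_inv] at hcancel
      rw [le_div_iff_mul_le, mul_assoc, h, hcancel]
    calc N = span R {v} * (span R {v⁻¹} * N) :=
          (span_singleton_mul_span_singleton_inv_mul hv N).symm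
      _ ≤ span R {v} * (N / N) := mul_le_mul_right hD _
  · calc span R {v} * (N / N) ≤ N * (N / N) :=
          mul_le_mul_left ((span_singleton_le_iff_mem v N).2 hvN) _
      _ ≤ N := by rw [mul_comm]; exact le_div_iff_mul_le.1 le_rfl

end Submodule

section FractionalIdeal

variable {R K : Type*} [CommRing R] [Field K] [Algebra R K]

lemma quotLength_span_singleton_mul {u : K} (hu : u ≠ 0) {A B : Submodule R K} (h : B ≤ A) :
    quotLength R (span R {u} * A) (span R {u} * B) = quotLength R A B := by
  let φ := orderIsoMapComap ((LinearEquiv.smulOfNeZero K K u hu).restrictScalars R)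
  have hφ : ∀ C, φ C = span R {u} * C := fun C => by
    ext z
    rw [mem_span_singleton_mul]
    rfl
  have := quotLength_eq_of_orderIso h (φ.monotone h) (φ.Icc B A)
  rwa [hφ, hφ, eq_comm] at this

/-- `D ↦ ω / D` is an order-reversing bijection between the two intervals. -/
lemma quotLength_div_eq {ω P Q : Submodule R K} (hPQ : P ≤ Q)
    (hP : ∀ D ∈ Set.Icc P Q, ω / (ω / D) = D)
    (hQ : ∀ D ∈ Set.Icc (ω / Q) (ω / P), ω / (ω / D) = D) :
    quotLength R Q P = quotLength R (ω / P) (ω / Q) := by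
  refine quotLength_eq_of_orderIso_dual hPQ (div_le_div_left ω hPQ)
    { toFun D := OrderDual.toDual
        ⟨ω / D.1, div_le_div_left ω D.2.2, div_le_div_left ω D.2.1⟩
      invFun D := ⟨ω / (OrderDual.ofDual D).1, ?_, ?_⟩
      left_inv D := Subtype.ext (hP D.1 D.2)
      right_inv D := congrArg OrderDual.toDual (Subtype.ext (hQ _ (OrderDual.ofDual D).2))
      map_rel_iff' := ?_ }
  · exact (hP P ⟨le_rfl, hPQ⟩).ge.trans (div_le_div_left ω (OrderDual.ofDual D).2.2)
  · exact (div_le_div_left ω (OrderDual.ofDual D).2.1).trans (hP Q ⟨hPQ, le_rfl⟩).le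
  · intro D D'
    change ω / D'.1 ≤ ω / D.1 ↔ D ≤ D'
    refine ⟨fun h => ?_, fun h => div_le_div_left ω h⟩
    have := div_le_div_left ω h
    rwa [hP D.1 D.2, hP D'.1 D'.2] at this

variable {u : K}

/-- `ℓ(M/uM) + ℓ(uM/uR) = ℓ(M/uR) = ℓ(M/R) + ℓ(R/uR)`, and `ℓ(uM/uR) = ℓ(M/R)` is finite. -/
lemma quotLength_span_singleton_mul_self (hu0 : u ≠ 0) (hu1 : span R {u} ≤ 1)
    {M : Submodule R K} (hM : 1 ≤ M) (hfin : quotLength R M 1 ≠ ⊤) :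
    quotLength R M (span R {u} * M) = quotLength R 1 (span R {u}) := by
  have hXXM : span R {u} ≤ span R {u} * M := by
    simpa using mul_le_mul_right hM (span R {u})
  have hXMM : span R {u} * M ≤ M := by simpa using mul_le_mul_left hu1 M
  have hscale : quotLength R (span R {u} * M) (span R {u}) = quotLength R M 1 := by
    simpa using quotLength_span_singleton_mul (R := R) hu0 hM
  have h₁ := quotLength_add hXXM hXMM
  rw [hscale, quotLength_add hu1 hM, add_comm] at h₁
  exact (WithTop.add_left_cancel hfin h₁).symm

lemma quotLength_span_singleton_pow_mul (hu0 : u ≠ 0) (hu1 : span R {u} ≤ 1)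
    (M : Submodule R K) (k : ℕ) :
    quotLength R M (span R {u} ^ k * M) = k * quotLength R M (span R {u} * M) := by
  induction k with
  | zero => simp [quotLength_self]
  | succ k ih =>
    have hle : span R {u} ^ k * M ≤ M := by simpa using mul_le_mul_left (pow_le_one' hu1 k) M
    rw [pow_succ', mul_assoc, quotLength_add (mul_le_mul_right hle _)
      (by simpa using mul_le_mul_left hu1 M), quotLength_span_singleton_mul hu0 hle, ih]
    push_cast
    ring

lemma quotLength_one_idl (hinj : Function.Injective (algebraMap R K)) (I : Ideal R) :
    quotLength R 1 (idl R K I) = Module.length R (R ⧸ I) := by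
  let e : R ≃ₗ[R] (1 : Submodule R K) :=
    (LinearEquiv.ofInjective (Algebra.linearMap R K) hinj).trans
      (LinearEquiv.ofEq _ _ one_eq_range.symm)
  refine (Submodule.Quotient.equiv I _ e ?_).length_eq.symm
  ext z
  simp only [mem_map, mem_comap, subtype_apply, idl]
  exact ⟨fun ⟨a, ha, hae⟩ => ⟨a, ha, congrArg Subtype.val hae⟩,
    fun ⟨a, ha, hae⟩ => ⟨a, ha, Subtype.ext hae⟩⟩

end FractionalIdeal

section IntegralClosure

variable {R K : Type*} [CommRing R] [Field K] [Algebra R K]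

lemma one_le_integralClosure : (1 : Submodule R K) ≤ (integralClosure R K).toSubmodule := by
  rw [← Algebra.toSubmodule_bot]
  exact Subalgebra.toSubmodule.monotone bot_le

lemma integralClosure_mul_le :
    (integralClosure R K).toSubmodule * (integralClosure R K).toSubmodule ≤
      (integralClosure R K).toSubmodule := by
  simpa using Subalgebra.mul_toSubmodule_le (integralClosure R K) (integralClosure R K)

lemma div_self_le_integralClosure {N : Submodule R K} (hN : N ≠ ⊥) (hfg : N.FG) :
    N / N ≤ (integralClosure R K).toSubmodule := fun z hz =>
  isIntegral_of_smul_mem_submodule N hN hfg z hz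

lemma one_div_ne_bot_of_fg [Nontrivial R] [IsFractionRing R K] {N : Submodule R K} (hN : N.FG) :
    1 / N ≠ ⊥ := by
  obtain ⟨a, ha, hint⟩ := FractionalIdeal.isFractional_of_fg (S := nonZeroDivisors R) hN
  refine ne_bot_of_le_ne_bot ?_ ((span_singleton_le_iff_mem (algebraMap R K a) _).2 fun y hy => ?_)
  · exact span_singleton_eq_bot.not.2 (IsFractionRing.to_map_ne_zero_of_mem_nonZeroDivisors ha)
  · obtain ⟨r, hr⟩ := hint y hy
    exact mem_one.2 ⟨r, by rw [hr, Algebra.smul_def]⟩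

lemma fg_integralClosure [Module.Finite R (integralClosure R K)] :
    (integralClosure R K).toSubmodule.FG :=
  Module.Finite.iff_fg.1 ‹_›

end IntegralClosure

section Reduction

variable {R K : Type*} [CommRing R] [Field K] [Algebra R K] {J : Submodule R K} {u : K} {ν : ℕ}

lemma pow_add_eq_of_reduction (hred : ∀ k ≥ ν, J ^ (k + 1) = span R {u} * J ^ k) (m : ℕ) :
    J ^ (ν + m) = span R {u} ^ m * J ^ ν := by
  induction m with
  | zero => simp
  | succ m ih => rw [← add_assoc, hred _ (Nat.le_add_right ν m), ih, pow_succ', mul_assoc]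

lemma iSup_div_self_pow_eq_of_reduction (hred : ∀ k ≥ ν, J ^ (k + 1) = span R {u} * J ^ k)
    (hu : u ≠ 0) : ⨆ n, J ^ n / J ^ n = J ^ ν / J ^ ν := by
  refine le_antisymm (iSup_le fun n => ?_) (le_iSup (fun n => J ^ n / J ^ n) ν)
  calc J ^ n / J ^ n ≤ (J ^ ν * J ^ n) / (J ^ ν * J ^ n) := div_self_le_mul_div_self _ _
    _ = J ^ ν / J ^ ν := by
      rw [← pow_add, pow_add_eq_of_reduction hred, span_pow, Set.singleton_pow,
        div_self_span_singleton_mul (pow_ne_zero n hu)]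

lemma pow_eq_span_singleton_pow_mul_iSup_div_self
    (hred : ∀ k ≥ ν, J ^ (k + 1) = span R {u} * J ^ k) (hu : u ≠ 0) (huJ : u ∈ J) :
    J ^ ν = span R {u} ^ ν * ⨆ n, J ^ n / J ^ n := by
  rw [iSup_div_self_pow_eq_of_reduction hred hu, span_pow, Set.singleton_pow]
  refine eq_span_singleton_mul_div_self (pow_ne_zero ν hu) (pow_mem_pow J huJ ν) ?_
  rw [← pow_add, pow_add_eq_of_reduction hred, span_pow, Set.singleton_pow]

end Reduction

section Blowup

variable {R K : Type*} [CommRing R] [Field K] [Algebra R K]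

lemma idl_span_singleton (x : R) :
    idl R K (Ideal.span {x}) = span R {algebraMap R K x} := by
  rw [idl, Ideal.span, map_span, Set.image_singleton, Algebra.linearMap_apply]

lemma idl_ne_bot (hinj : Function.Injective (algebraMap R K)) {I : Ideal R} (hI : I ≠ ⊥) :
    idl R K I ≠ ⊥ :=
  (map_injective_of_injective (f := Algebra.linearMap R K) hinj).ne_iff' (map_bot _) |>.2 hI

lemma idl_pow_succ_eq {I : Ideal R} {x : R} {k : ℕ} (h : I ^ (k + 1) = Ideal.span {x} * I ^ k) :
    idl R K I ^ (k + 1) = span R {algebraMap R K x} * idl R K I ^ k := by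
  have := congrArg (map (Algebra.ofId R K).toLinearMap) h
  rwa [Submodule.map_pow, Submodule.map_mul, Submodule.map_pow, Ideal.span, map_span,
    Set.image_singleton] at this

lemma one_le_blowup (I : Ideal R) : 1 ≤ blowup R K I :=
  le_iSup_of_le 0 (by rw [pow_zero]; exact one_le_one_div.2 le_rfl)

lemma blowup_le_integralClosure [IsNoetherianRing R] (hinj : Function.Injective (algebraMap R K))
    {I : Ideal R} (hI : I ≠ ⊥) : blowup R K I ≤ (integralClosure R K).toSubmodule := by
  obtain ⟨a, ha, ha0⟩ := exists_mem_ne_zero_of_ne_bot (idl_ne_bot hinj hI)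
  exact iSup_le fun n => div_self_le_integralClosure
    ((Submodule.ne_bot_iff _).2 ⟨_, pow_mem_pow _ ha n, pow_ne_zero n ha0⟩)
    ((FG.map _ (IsNoetherian.noetherian I)).pow n)

variable {I : Ideal R} {x : R} {ν : ℕ} (hinj : Function.Injective (algebraMap R K)) (hI : I ≠ ⊥)
  (hred : ∀ k ≥ ν, I ^ (k + 1) = Ideal.span {x} * I ^ k)
include hinj hI hred

lemma algebraMap_ne_zero_of_reduction : algebraMap R K x ≠ 0 := by
  intro h0
  have h := idl_pow_succ_eq (K := K) (hred ν le_rfl)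
  rw [h0, span_zero_singleton, bot_mul, pow_eq_bot (Nat.succ_ne_zero ν)] at h
  exact idl_ne_bot hinj hI h

lemma blowup_eq_idl_pow_div_self : blowup R K I = idl R K I ^ ν / idl R K I ^ ν :=
  iSup_div_self_pow_eq_of_reduction (fun k hk => idl_pow_succ_eq (hred k hk))
    (algebraMap_ne_zero_of_reduction hinj hI hred)

lemma idl_pow_le_one_div_blowup : idl R K I ^ ν ≤ 1 / blowup R K I := by
  rw [Submodule.le_div_iff_mul_le, blowup_eq_idl_pow_div_self hinj hI hred, mul_comm]
  exact (Submodule.le_div_iff_mul_le.1 le_rfl).trans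
    (pow_le_one' (fun _ ⟨a, _, ha⟩ => mem_one.2 ⟨a, ha⟩) ν)

lemma quotLength_blowup_idl_pow (hxI : x ∈ I) (hfin : quotLength R (blowup R K I) 1 ≠ ⊤) :
    quotLength R (blowup R K I) (idl R K I ^ ν) = ν * Module.length R (R ⧸ Ideal.span {x}) := by
  have hx0 := algebraMap_ne_zero_of_reduction hinj hI hred
  have hX1 : span R {algebraMap R K x} ≤ 1 :=
    (span_singleton_le_iff_mem _ _).2 (mem_one.2 ⟨x, rfl⟩)
  rw [pow_eq_span_singleton_pow_mul_iSup_div_self (fun k hk => idl_pow_succ_eq (hred k hk)) hx0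
      (mem_map_of_mem hxI), ← blowup, quotLength_span_singleton_pow_mul hx0 hX1,
    quotLength_span_singleton_mul_self hx0 hX1 (one_le_blowup I) hfin, ← idl_span_singleton,
    quotLength_one_idl hinj]

end Blowup

section Canonical

variable {R K : Type*} [CommRing R] [Field K] [Algebra R K]

structure IsCanonicalFractionalIdeal (ω : Submodule R K) : Prop where
  one_le : 1 ≤ ω
  le_integralClosure : ω ≤ (integralClosure R K).toSubmodule
  div_self : ω / ω = 1
  div_div : ∀ J : Submodule R K, J ≠ ⊥ → J.FG → ω / (ω / J) = J

namespace IsCanonicalFractionalIdeal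

variable {ω : Submodule R K} (hω : IsCanonicalFractionalIdeal ω)
include hω

lemma ne_bot : ω ≠ ⊥ :=
  (Submodule.ne_bot_iff _).2 ⟨1, Submodule.one_le.1 hω.one_le, one_ne_zero⟩

lemma mul_integralClosure :
    ω * (integralClosure R K).toSubmodule = (integralClosure R K).toSubmodule :=
  le_antisymm ((mul_le_mul_left hω.le_integralClosure _).trans integralClosure_mul_le)
    (by simpa using mul_le_mul_left hω.one_le (integralClosure R K).toSubmodule)

variable [Nontrivial R] [IsNoetherianRing R] [IsFractionRing R K]
  [Module.Finite R (integralClosure R K)] {T : Submodule R K}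
  (hT1 : 1 ≤ T) (hTS : T ≤ (integralClosure R K).toSubmodule)
include hT1 hTS

lemma quotLength_one_div_eq : quotLength R 1 (1 / T) = quotLength R (ω * T) ω := by
  have hSfg := fg_integralClosure (R := R) (K := K)
  have hrefl : ∀ {P Q : Submodule R K}, P ≠ ⊥ → Q ≤ (integralClosure R K).toSubmodule →
      ∀ D ∈ Set.Icc P Q, ω / (ω / D) = D := fun hP hQ D hD =>
    hω.div_div D (ne_bot_of_le_ne_bot hP hD.1) (hSfg.of_le (hD.2.trans hQ))
  have hωT : ω ≤ ω * T := by simpa using mul_le_mul_right hT1 ω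
  have hωTS : ω * T ≤ (integralClosure R K).toSubmodule :=
    (mul_le_mul' hω.le_integralClosure hTS).trans integralClosure_mul_le
  have h1T : 1 / T ≠ ⊥ :=
    ne_bot_of_le_ne_bot (one_div_ne_bot_of_fg hSfg) (div_le_div_left 1 hTS)
  rw [quotLength_div_eq hωT (hrefl hω.ne_bot hωTS)
      (hrefl (one_div_eq_div_mul hω.div_self T ▸ h1T) (hω.div_self ▸ one_le_integralClosure)),
    hω.div_self, one_div_eq_div_mul hω.div_self]

/-- Both sides compute `ℓ(ωT/R)`. -/
lemma quotLength_add_quotLength_mul_eq :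
    quotLength R T 1 + quotLength R (ω * T) T = quotLength R ω 1 + quotLength R 1 (1 / T) := by
  rw [← quotLength_add hT1 (by simpa using mul_le_mul_left hω.one_le T),
    hω.quotLength_one_div_eq hT1 hTS,
    ← quotLength_add hω.one_le (by simpa using mul_le_mul_right hT1 ω)]

end IsCanonicalFractionalIdeal

end Canonical

theorem stmt_4_general
    (R : Type*) [CommRing R] [IsDomain R] [IsNoetherianRing R]
    (K : Type*) [Field K] [Algebra R K] [IsFractionRing R K]
    [Module.Finite R (integralClosure R K)]
    (I : Ideal R) (hI0 : I ≠ ⊥)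
    (x : R) (hxI : x ∈ I)
    (ν : ℕ) (hν : IsLeast {n : ℕ | ∀ k ≥ n, I ^ (k + 1) = Ideal.span {x} * I ^ k} ν)
    (e : ℕ) (he : (e : WithBot ℕ∞) = modLength R (R ⧸ Ideal.span {x}))
    (ρ : ℕ) (hρ : (ρ : WithBot ℕ∞) = qlen R (blowup R K I) 1)
    (δ : ℕ) (hδ : (δ : WithBot ℕ∞) = qlen R ((integralClosure R K).toSubmodule) 1)
    (c : ℕ) (hc : (c : WithBot ℕ∞) = qlen R ((integralClosure R K).toSubmodule) ((1 : Submodule R K) / ((integralClosure R K).toSubmodule)))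
    (ω : Submodule R K) (hω1 : 1 ≤ ω) (hω2 : ω < ((integralClosure R K).toSubmodule))
    (hωω : ω / ω = 1)
    (hωdual : ∀ J : Submodule R K, J ≠ ⊥ → J.FG → ω / (ω / J) = J)
    (ℓ₁ : ℕ) (hℓ₁ : (ℓ₁ : WithBot ℕ∞) = qlen R ((1 : Submodule R K) / (blowup R K I)) ((idl R K I) ^ ν))
    (ℓ₂ : ℕ) (hℓ₂ : (ℓ₂ : WithBot ℕ∞) = qlen R (ω * (blowup R K I)) (blowup R K I)) :
    (2 * ρ : ℤ) = (e : ℤ) * ν + (2 * δ - c) - ℓ₁ - ℓ₂ := by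
  rw [natCast_eq_qlen_iff] at hρ hδ hc hℓ₁ hℓ₂
  rw [natCast_eq_modLength_iff] at he
  have hinj := IsFractionRing.injective R K
  have hω : IsCanonicalFractionalIdeal ω := ⟨hω1, hω2.le, hωω, hωdual⟩
  have h1Λ := one_le_blowup (K := K) I
  have hΛS := blowup_le_integralClosure hinj hI0
  have h1S := one_le_integralClosure (R := R) (K := K)
  have hΛ := quotLength_blowup_idl_pow hinj hI0 hν.1 hxI (hρ ▸ ENat.natCast_ne_top ρ)
  rw [quotLength_add (idl_pow_le_one_div_blowup hinj hI0 hν.1) ((one_div_le_one h1Λ).trans h1Λ),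
    quotLength_add (one_div_le_one h1Λ) h1Λ, ← hℓ₁, ← hρ, ← he, ← Nat.cast_mul] at hΛ
  have hΛω := hω.quotLength_add_quotLength_mul_eq h1Λ hΛS
  rw [← hρ, ← hℓ₂] at hΛω
  have hSω := hω.quotLength_add_quotLength_mul_eq h1S le_rfl
  rw [hω.mul_integralClosure, quotLength_self, add_zero, ← hδ] at hSω
  have hC := quotLength_add (one_div_le_one h1S) h1S
  rw [← hc, ← hδ] at hC
  generalize quotLength R 1 (1 / blowup R K I) = a at *
  generalize quotLength R ω 1 = W at *
  generalize quotLength R 1 (1 / (integralClosure R K).toSubmodule) = g at *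
  have ha : a ≠ ⊤ := by rintro rfl; exact ENat.natCast_ne_top _ (hΛ.symm.trans (by simp))
  have hW : W ≠ ⊤ := by rintro rfl; exact ENat.natCast_ne_top _ (hSω.trans (by simp))
  have hg : g ≠ ⊤ := by rintro rfl; exact ENat.natCast_ne_top _ (hSω.trans (by simp))
  lift a to ℕ using ha
  lift W to ℕ using hW
  lift g to ℕ using hg
  norm_cast at hΛ hΛω hSω hC
  push_cast [← hΛ, hSω, hC]
  linarith

theorem stmt_4
    (R : Type*) [CommRing R] [IsDomain R] [IsLocalRing R] [IsNoetherianRing R]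
    (K : Type*) [Field K] [Algebra R K] [IsFractionRing R K]
    [IsDiscreteValuationRing (integralClosure R K)]
    [Module.Finite R (integralClosure R K)]
    (hres : ∀ y : integralClosure R K, ∃ a : R,
      y - algebraMap R (integralClosure R K) a ∈ maximalIdeal (integralClosure R K))
    (hkinf : Infinite (ResidueField R))
    (I : Ideal R) (hI0 : I ≠ ⊥) (hIrad : I.radical = maximalIdeal R)
    (hInp : ¬ I.IsPrincipal)
    (x : R) (hxI : x ∈ I)
    (ν : ℕ) (hν : IsLeast {n : ℕ | ∀ k ≥ n, I ^ (k + 1) = Ideal.span {x} * I ^ k} ν)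
    (e : ℕ) (he : (e : WithBot ℕ∞) = modLength R (R ⧸ Ideal.span {x}))
    (ρ : ℕ) (hρ : (ρ : WithBot ℕ∞) = qlen R (blowup R K I) 1)
    (δ : ℕ) (hδ : (δ : WithBot ℕ∞) = qlen R ((integralClosure R K).toSubmodule) 1)
    (c : ℕ) (hc : (c : WithBot ℕ∞) = qlen R ((integralClosure R K).toSubmodule) ((1 : Submodule R K) / ((integralClosure R K).toSubmodule)))
    (ω : Submodule R K) (hω1 : 1 ≤ ω) (hω2 : ω < ((integralClosure R K).toSubmodule))
    (hωω : ω / ω = 1)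
    (hωdual : ∀ J : Submodule R K, J ≠ ⊥ → J.FG → ω / (ω / J) = J)
    (ℓ₁ : ℕ) (hℓ₁ : (ℓ₁ : WithBot ℕ∞) = qlen R ((1 : Submodule R K) / (blowup R K I)) ((idl R K I) ^ ν))
    (ℓ₂ : ℕ) (hℓ₂ : (ℓ₂ : WithBot ℕ∞) = qlen R (ω * (blowup R K I)) (blowup R K I)) :
    (2 * ρ : ℤ) = (e : ℤ) * ν + (2 * δ - c) - ℓ₁ - ℓ₂ :=
  stmt_4_general R K I hI0 x hxI ν hν e he ρ hρ δ hδ c hc ω hω1 hω2 hωω hωdual ℓ₁ hℓ₁ ℓ₂ hℓ₂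
end
end

section
/- Let s_0 = 0 < s_1 < ⋯ < s_n = c be the first n+1 elements of v(R), where n = c − δ, and let Γ = {i ∈ {1,…,n} : s_{i−1} ∈ v(R:Λ)}. Then length_R(R̄/ωΛ) ≤ Σ_{i∈Γ} r_i ≤ length_R(R̄/Λ**), where [r_1,…,r_n] is the type sequence of R given by r_i = length_R((R:R_i)/(R:R_{i−1})) with R_i = {x ∈ R : v(x) ≥ s_i}. -/
open Submodule IsLocalRing

noncomputable section

namespace Stmt10Aux

set_option linter.unusedSectionVars false
set_option linter.unusedVariables false
set_option maxHeartbeats 1000000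

variable {R : Type*} [CommRing R] [IsDomain R] [IsLocalRing R] [IsNoetherianRing R]
variable {K : Type*} [Field K] [Algebra R K] [IsFractionRing R K]
variable {v : K → WithTop ℤ}

section VBasic
variable (hv0 : ∀ y : K, v y = ⊤ ↔ y = 0)
variable (hvmul : ∀ y z : K, v (y * z) = v y + v z)
variable (hvadd : ∀ y z : K, min (v y) (v z) ≤ v (y + z))

include hv0 hvmul in
lemma v_one : v 1 = 0 := by
  have h := hvmul 1 1
  rw [mul_one] at h
  have h1 : v 1 ≠ ⊤ := by simp [hv0]
  lift v 1 to ℤ using h1 with a ha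
  rw [show ((a : WithTop ℤ) = a + a) ↔ (a = a + a) from by exact_mod_cast Iff.rfl] at h
  have : a = 0 := by omega
  simp [this]

include hv0 hvmul in
lemma v_neg (y : K) : v (-y) = v y := by
  have hm1 : v (-1 : K) = 0 := by
    have h := hvmul (-1) (-1)
    rw [neg_mul_neg, one_mul, v_one hv0 hvmul] at h
    have h1 : v (-1 : K) ≠ ⊤ := by simp [hv0]
    lift v (-1 : K) to ℤ using h1 with a ha
    have : (0 : WithTop ℤ) = ((a + a : ℤ) : WithTop ℤ) := by push_cast; exact h
    have : (0 : ℤ) = a + a := by exact_mod_cast this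
    have : a = 0 := by omega
    simp [this]
  calc v (-y) = v ((-1) * y) := by ring_nf
  _ = v (-1 : K) + v y := hvmul _ _
  _ = v y := by rw [hm1, zero_add]

include hv0 hvmul hvadd in
lemma v_add_eq_of_lt {y z : K} (h : v y < v z) : v (y + z) = v y := by
  refine le_antisymm ?_ ?_
  · by_contra hc
    push_neg at hc
    have h2 : v y = v ((y + z) + (-z)) := by ring_nf
    have h3 : min (v (y+z)) (v (-z)) ≤ v y := h2 ▸ hvadd _ _
    rw [v_neg hv0 hvmul] at h3
    rcases min_le_iff.mp h3 with h4 | h4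
    · exact absurd (lt_of_lt_of_le hc h4) (lt_irrefl _)
    · exact absurd (lt_of_lt_of_le h h4) (lt_irrefl _)
  · have := hvadd y z
    rwa [min_eq_left h.le] at this

include hv0 hvmul in
lemma v_inv {y : K} (hy : y ≠ 0) : v y + v y⁻¹ = 0 := by
  have := hvmul y y⁻¹
  rw [mul_inv_cancel₀ hy, v_one hv0 hvmul] at this
  exact this.symm

end VBasic

/-- The set of natural values of the nonzero elements of a submodule of `K`. -/
def VS (v : K → WithTop ℤ) (Z : Submodule R K) : Set ℕ :=
  {m | ∃ z ∈ Z, z ≠ 0 ∧ v z = ((m : ℤ) : WithTop ℤ)}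

lemma VS_mono {Z Z' : Submodule R K} (h : Z ≤ Z') : VS v Z ⊆ VS v Z' := by
  rintro m ⟨z, hz, h0, hvz⟩; exact ⟨z, h hz, h0, hvz⟩

section Setting

variable [IsDiscreteValuationRing (integralClosure R K)]
variable (hv0 : ∀ y : K, v y = ⊤ ↔ y = 0)
variable (hvmul : ∀ y z : K, v (y * z) = v y + v z)
variable (hvadd : ∀ y z : K, min (v y) (v z) ≤ v (y + z))
variable (hvRbar : ∀ y : K, y ∈ integralClosure R K ↔ 0 ≤ v y)
variable (hres : ∀ y : integralClosure R K, ∃ a : R,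
      y - algebraMap R (integralClosure R K) a ∈ maximalIdeal (integralClosure R K))

include hvRbar in
lemma v_algebraMap_nonneg (r : R) : 0 ≤ v (algebraMap R K r) :=
  (hvRbar _).mp (Subalgebra.algebraMap_mem _ r)

include hvmul hvRbar in
lemma v_smul_le (r : R) (x : K) : v x ≤ v (r • x) := by
  rw [Algebra.smul_def, hvmul]
  have := v_algebraMap_nonneg hvRbar r
  calc v x = 0 + v x := (zero_add _).symm
  _ ≤ v (algebraMap R K r) + v x := by gcongr

include hvRbar hv0 in
lemma v_nat_of_mem {z : K} (hz : z ∈ (integralClosure R K).toSubmodule) (h0 : z ≠ 0) :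
    ∃ m : ℕ, v z = ((m : ℤ) : WithTop ℤ) := by
  have h1 : 0 ≤ v z := (hvRbar z).mp hz
  have h2 : v z ≠ ⊤ := by simp [hv0, h0]
  lift v z to ℤ using h2 with a ha
  have : 0 ≤ a := by exact_mod_cast h1
  exact ⟨a.toNat, by simp [Int.toNat_of_nonneg this]⟩

/-- The submodule of elements of value at least `m`. -/
def Vsub (hv0 : ∀ y : K, v y = ⊤ ↔ y = 0)
    (hvmul : ∀ y z : K, v (y * z) = v y + v z)
    (hvadd : ∀ y z : K, min (v y) (v z) ≤ v (y + z))
    (hvRbar : ∀ y : K, y ∈ integralClosure R K ↔ 0 ≤ v y) (m : ℕ) : Submodule R K where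
  carrier := {x | ((m : ℤ) : WithTop ℤ) ≤ v x}
  add_mem' := fun hx hy => le_trans (le_min hx hy) (hvadd _ _)
  zero_mem' := by simp only [Set.mem_setOf_eq, (hv0 0).mpr rfl]; exact le_top
  smul_mem' := fun r x hx => le_trans hx (v_smul_le hvmul hvRbar r x)

lemma mem_Vsub {m : ℕ} {x : K} :
    x ∈ Vsub hv0 hvmul hvadd hvRbar m ↔ ((m : ℤ) : WithTop ℤ) ≤ v x := Iff.rfl

include hv0 hvmul hvRbar hres in
lemma res_step {z z₀ : K} (h00 : z₀ ≠ 0) (hzz : v z = v z₀) (hge : 0 ≤ v z₀) :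
    ∃ lam : R, v z₀ + 1 ≤ v (z - lam • z₀) := by
  classical
  have hz0top : v z₀ ≠ ⊤ := by simp [hv0, h00]
  set w := z * z₀⁻¹ with hw
  have hvw : v w = v z + v z₀⁻¹ := hvmul _ _
  have hvz0inv : v z₀ + v z₀⁻¹ = 0 := v_inv hv0 hvmul h00
  have hvw0 : 0 ≤ v w := by
    rw [hvw, hzz, hvz0inv]
  have hwmem : w ∈ integralClosure R K := (hvRbar w).mpr hvw0
  obtain ⟨a, ha⟩ := hres ⟨w, hwmem⟩
  set u : K := w - algebraMap R K a with hu
  have humem : u ∈ integralClosure R K := by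
    exact Subalgebra.sub_mem _ hwmem (Subalgebra.algebraMap_mem _ a)
  have hcoe : ((⟨w, hwmem⟩ - algebraMap R (integralClosure R K) a : integralClosure R K) : K) = u := by
    simp [hu]
  have hvu : 1 ≤ v u := by
    by_cases h0 : u = 0
    · rw [h0, (hv0 0).mpr rfl]; exact le_top
    · have h1 : 0 ≤ v u := (hvRbar u).mp humem
      rcases lt_or_eq_of_le h1 with h2 | h2
      · by_cases ht : v u = ⊤
        · rw [ht]; exact le_top
        · lift v u to ℤ using ht with b hb
          have : 0 < b := by exact_mod_cast h2
          exact_mod_cast this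
      · exfalso
        have h4 : v u = 0 := h2.symm
        have huinv : u⁻¹ ∈ integralClosure R K := by
          rw [hvRbar]
          have h5 := v_inv hv0 hvmul h0
          rw [h4, zero_add] at h5
          rw [h5]
        have : IsUnit (⟨w, hwmem⟩ - algebraMap R (integralClosure R K) a) := by
          refine isUnit_iff_exists_inv.mpr ⟨⟨u⁻¹, huinv⟩, ?_⟩
          ext
          push_cast [hcoe]
          exact mul_inv_cancel₀ h0
        rw [IsLocalRing.mem_maximalIdeal] at ha
        exact ha this
  refine ⟨a, ?_⟩
  have heq : z - a • z₀ = z₀ * u := by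
    rw [hu, hw, Algebra.smul_def]
    field_simp
  rw [heq, hvmul]
  gcongr

include hv0 hvmul hvadd hvRbar hres in
lemma le_of_VS_subset (X Y Z Z' : Submodule R K)
    (hXR : X ≤ (integralClosure R K).toSubmodule)
    (hYZ : Y ≤ Z) (hZZ' : Z ≤ Z') (hZ'X : Z' ≤ X) (N : ℕ)
    (hcond : ∀ z ∈ X, ((N : ℤ) : WithTop ℤ) ≤ v z → z ∈ Y)
    (hVS : VS v Z' ⊆ VS v Z) : Z' ≤ Z := by
  suffices h : ∀ d : ℕ, ∀ z ∈ Z', (((N : ℤ) - d : ℤ) : WithTop ℤ) ≤ v z → z ∈ Z by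
    intro z hz
    by_cases h0 : z = 0
    · rw [h0]; exact Z.zero_mem
    · refine h N z hz ?_
      have : (0 : WithTop ℤ) ≤ v z := (hvRbar z).mp (hXR (hZ'X hz))
      simpa using this
  intro d
  induction d with
  | zero =>
    intro z hz hvz
    exact hYZ (hcond z (hZ'X hz) (by simpa using hvz))
  | succ d ih =>
    intro z hz hvz
    by_cases h0 : z = 0
    · rw [h0]; exact Z.zero_mem
    obtain ⟨m, hm⟩ := v_nat_of_mem hv0 hvRbar (hXR (hZ'X hz)) h0
    by_cases hge : (((N : ℤ) - d : ℤ) : WithTop ℤ) ≤ v z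
    · exact ih z hz hge
    · have hmlt : (m : ℤ) < (N : ℤ) - d := by
        rw [hm] at hge
        exact_mod_cast not_le.mp hge
      have hmVS : m ∈ VS v Z' := ⟨z, hz, h0, hm⟩
      obtain ⟨z₀, hz₀Z, h00, hvz₀⟩ := hVS hmVS
      obtain ⟨lam, hlam⟩ := res_step hv0 hvmul hvRbar hres h00
        (by rw [hm, hvz₀]) (by rw [hvz₀]; exact_mod_cast Int.ofNat_nonneg m)
      have hw : z - lam • z₀ ∈ Z' := Z'.sub_mem hz (Z'.smul_mem lam (hZZ' hz₀Z))
      have hwv : (((N : ℤ) - d : ℤ) : WithTop ℤ) ≤ v (z - lam • z₀) := by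
        refine le_trans ?_ hlam
        rw [hvz₀]
        have h6 : ((N : ℤ) - (d+1) : ℤ) ≤ (m : ℤ) := by
          rw [hm] at hvz
          exact_mod_cast hvz
        have : ((N : ℤ) - d : ℤ) ≤ (m : ℤ) + 1 := by omega
        exact_mod_cast this
      have hz2 : z = (z - lam • z₀) + lam • z₀ := by ring
      rw [hz2]
      exact Z.add_mem (ih _ hw hwv) (Z.smul_mem lam hz₀Z)

include hv0 hvmul hvadd hvRbar hres in
theorem krullDim_Icc_eq (X Y : Submodule R K) (hYX : Y ≤ X)
    (hXR : X ≤ (integralClosure R K).toSubmodule) (N : ℕ)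
    (hcond : ∀ z ∈ X, ((N : ℤ) : WithTop ℤ) ≤ v z → z ∈ Y) :
    Order.krullDim (Set.Icc Y X) = (((VS v X \ VS v Y).ncard : ℕ) : WithBot ℕ∞) := by
  classical
  have hsub_lt : VS v X \ VS v Y ⊆ Set.Iio N := by
    rintro m ⟨⟨z, hz, h0, hvz⟩, hnot⟩
    by_contra hge
    simp only [Set.mem_Iio, not_lt] at hge
    exact hnot ⟨z, hcond z hz (by rw [hvz]; exact_mod_cast hge), h0, hvz⟩
  have hfin : (VS v X \ VS v Y).Finite := (Set.finite_Iio N).subset hsub_lt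
  set k := (VS v X \ VS v Y).ncard with hk
  refine le_antisymm ?_ ?_
  · -- upper bound
    have hbound : ∀ p : LTSeries (Set.Icc Y X), p.length ≤ k := by
      intro p
      set A : Fin (p.length + 1) → Set ℕ := fun j => VS v (p j).1 \ VS v Y with hA
      have hAS : ∀ j, A j ⊆ VS v X \ VS v Y := by
        intro j m hm
        exact ⟨VS_mono (p j).2.2 hm.1, hm.2⟩
      have hssub : ∀ j j' : Fin (p.length + 1), j < j' → A j ⊂ A j' := by
        intro j j' hjj'
        have hlt : (p j).1 < (p j').1 := by
          exact_mod_cast p.strictMono hjj'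
        constructor
        · intro m hm; exact ⟨VS_mono hlt.le hm.1, hm.2⟩
        · intro hcontra
          have hVSle : VS v (p j').1 ⊆ VS v (p j).1 := by
            intro m hm
            by_cases hY : m ∈ VS v Y
            · exact VS_mono (p j).2.1 hY
            · exact (hcontra ⟨hm, hY⟩).1
          have := le_of_VS_subset hv0 hvmul hvadd hvRbar hres X Y (p j).1 (p j').1 hXR
            (p j).2.1 hlt.le (p j').2.2 N hcond hVSle
          exact absurd this hlt.not_ge
      have hmono : ∀ (m : ℕ) (hm : m < p.length + 1), m ≤ (A ⟨m, hm⟩).ncard := by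
        intro m
        induction m with
        | zero => intro hm; exact Nat.zero_le _
        | succ m ih =>
          intro hm
          have h1 : m < p.length + 1 := by omega
          have h2 : (A ⟨m, h1⟩).ncard < (A ⟨m+1, hm⟩).ncard := by
            refine Set.ncard_lt_ncard (hssub _ _ ?_) (hfin.subset (hAS _))
            exact Fin.mk_lt_mk.mpr (by omega)
          have := ih h1
          omega
      have h3 := hmono p.length (by omega)
      have h4 : (A ⟨p.length, by omega⟩).ncard ≤ k :=
        Set.ncard_le_ncard (hAS _) hfin
      omega
    rw [Order.krullDim]
    exact iSup_le fun p => by exact_mod_cast hbound p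
  · -- lower bound
    set St := hfin.toFinset with hSt
    have hcard : St.card = k := by
      rw [hk]
      exact (Set.ncard_eq_toFinset_card _ hfin).symm
    have hStlt : ∀ u ∈ St, u < N := by
      intro u hu
      exact hsub_lt (hfin.mem_toFinset.mp hu)
    set e := St.orderIsoOfFin hcard with he
    have hcut : ∀ j : Fin (k+1), (j:ℕ) ≠ 0 → k - (j:ℕ) < k := by
      intro j hj
      have := j.2
      omega
    classical
    set cutoff : Fin (k+1) → ℕ := fun j =>
      if h : (j:ℕ) = 0 then N else (e ⟨k - (j:ℕ), hcut j h⟩ : ℕ) with hcutoff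
    have hcutmem : ∀ (j : Fin (k+1)) (h : (j:ℕ) ≠ 0), cutoff j ∈ St := by
      intro j h
      simp only [hcutoff, dif_neg h]
      exact (e ⟨k - (j:ℕ), hcut j h⟩).2
    have hanti : ∀ j j' : Fin (k+1), j < j' → cutoff j' < cutoff j := by
      intro j j' hjj'
      have hj'0 : (j':ℕ) ≠ 0 := by
        have : (j:ℕ) < (j':ℕ) := hjj'
        omega
      by_cases hj0 : (j:ℕ) = 0
      · rw [hcutoff]
        simp only [dif_neg hj'0, dif_pos hj0]
        exact hStlt _ (e ⟨k - (j':ℕ), hcut j' hj'0⟩).2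
      · rw [hcutoff]
        simp only [dif_neg hj'0, dif_neg hj0]
        have hlt : (⟨k - (j':ℕ), hcut j' hj'0⟩ : Fin k) < ⟨k - (j:ℕ), hcut j hj0⟩ := by
          refine Fin.mk_lt_mk.mpr ?_
          have h1 : (j:ℕ) < (j':ℕ) := hjj'
          have := j'.2
          omega
        exact_mod_cast e.strictMono hlt
    set C : Fin (k+1) → Submodule R K := fun j =>
      Y ⊔ (X ⊓ (Vsub hv0 hvmul hvadd hvRbar (cutoff j))) with hC
    have hmemIcc : ∀ j, C j ∈ Set.Icc Y X := fun j =>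
      ⟨le_sup_left, sup_le hYX inf_le_left⟩
    have hstep : ∀ j j' : Fin (k+1), j < j' → C j < C j' := by
      intro j j' hjj'
      have hj'0 : (j':ℕ) ≠ 0 := by
        have : (j:ℕ) < (j':ℕ) := hjj'
        omega
      have hcc : cutoff j' < cutoff j := hanti j j' hjj'
      have hle : C j ≤ C j' := by
        refine sup_le_sup_left (inf_le_inf_left X ?_) Y
        intro x hx
        rw [mem_Vsub] at hx ⊢
        refine le_trans ?_ hx
        exact_mod_cast (by exact_mod_cast hcc.le : (cutoff j' : ℤ) ≤ (cutoff j : ℤ))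
      -- witness
      have huS : cutoff j' ∈ VS v X \ VS v Y := hfin.mem_toFinset.mp (hcutmem j' hj'0)
      obtain ⟨⟨x, hxX, hx0, hvx⟩, hnotY⟩ := huS
      have hxin : x ∈ C j' := by
        refine Submodule.mem_sup_right (Submodule.mem_inf.mpr ⟨hxX, ?_⟩)
        exact (mem_Vsub hv0 hvmul hvadd hvRbar).mpr (le_of_eq hvx.symm)
      have hxnot : x ∉ C j := by
        intro hmem
        rw [hC] at hmem
        rcases mem_sup.mp hmem with ⟨y, hy, x', hx', hsum⟩
        by_cases hx'0 : x' = 0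
        · rw [hx'0, add_zero] at hsum
          exact hnotY ⟨y, hy, by rw [hsum]; exact hx0, by rw [hsum]; exact hvx⟩
        · have hvx' : ((cutoff j : ℤ) : WithTop ℤ) ≤ v x' := hx'.2
          have hvxlt : v x < v x' := by
            rw [hvx]
            refine lt_of_lt_of_le ?_ hvx'
            exact_mod_cast (by exact_mod_cast hcc : (cutoff j' : ℤ) < (cutoff j : ℤ))
          have hyval : v y = v x := by
            have h1 : y = x + (-x') := by rw [← hsum]; ring
            rw [h1]
            rw [← v_neg hv0 hvmul x'] at hvxlt
            exact v_add_eq_of_lt hv0 hvmul hvadd hvxlt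
          have hy0 : y ≠ 0 := by
            intro h
            rw [h, (hv0 0).mpr rfl, hvx] at hyval
            exact (WithTop.coe_ne_top hyval.symm)
          exact hnotY ⟨y, hy, hy0, by rw [hyval, hvx]⟩
      exact lt_of_le_of_ne hle (fun heq => hxnot (heq ▸ hxin))
    have hchain : ∀ i : Fin k,
        (⟨C i.castSucc, hmemIcc _⟩ : Set.Icc Y X) < ⟨C i.succ, hmemIcc _⟩ := by
      intro i
      rw [Subtype.mk_lt_mk]
      exact hstep i.castSucc i.succ Fin.castSucc_lt_succ
    have := Order.LTSeries.length_le_krullDim (α := Set.Icc Y X)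
      ⟨k, fun j => ⟨C j, hmemIcc j⟩, hchain⟩
    exact_mod_cast this

end Setting

section Iso

variable {R : Type*} [CommRing R] [IsDomain R] [IsLocalRing R] [IsNoetherianRing R]
variable {K : Type*} [Field K] [Algebra R K] [IsFractionRing R K]

lemma qlen_eq_krullDim_Icc (X Y : Submodule R K) (hYX : Y ≤ X) :
    qlen R X Y = Order.krullDim (Set.Icc Y X) := by
  set N := Y.comap X.subtype with hN
  have e2 : {q : Submodule R ↥X // N ≤ q} ≃o Set.Icc Y X := by
    refine ⟨⟨fun q => ⟨Submodule.map X.subtype q.1, ?_, ?_⟩,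
      fun W => ⟨Submodule.comap X.subtype W.1, Submodule.comap_mono W.2.1⟩, ?_, ?_⟩, ?_⟩
    · have hmap : Submodule.map X.subtype (Y.comap X.subtype) = Y := by
        rw [Submodule.map_comap_subtype, inf_eq_right.mpr hYX]
      exact le_trans (le_of_eq hmap.symm) (Submodule.map_mono q.2)
    · exact Submodule.map_subtype_le X q.1
    · intro q
      apply Subtype.ext
      show Submodule.comap X.subtype (Submodule.map X.subtype q.1) = q.1
      rw [Submodule.comap_map_eq, Submodule.ker_subtype, sup_bot_eq]
    · intro W
      apply Subtype.ext
      show Submodule.map X.subtype (Submodule.comap X.subtype W.1) = W.1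
      rw [Submodule.map_comap_subtype, inf_eq_right.mpr W.2.2]
    · intro q q'
      exact Submodule.map_le_map_iff_of_injective (Submodule.injective_subtype X) _ _
  exact Order.krullDim_eq_of_orderIso ((Submodule.comapMkQRelIso N).trans e2)

variable [Module.Finite R (integralClosure R K)]

lemma Rbar_fg : ((integralClosure R K).toSubmodule : Submodule R K).FG := by
  have h : Module.Finite R ↥((integralClosure R K).toSubmodule) := by
    show Module.Finite R (integralClosure R K)
    infer_instance
  exact Module.Finite.iff_fg.mp h

lemma fg_of_le_Rbar {Z : Submodule R K}
    (h : Z ≤ (integralClosure R K).toSubmodule) : Z.FG := by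
  set Rb := ((integralClosure R K).toSubmodule : Submodule R K) with hRb
  have h1 : IsNoetherian R ↥Rb := isNoetherian_of_fg_of_noetherian Rb Rbar_fg
  have h2 : (Z.comap Rb.subtype).FG := IsNoetherian.noetherian _
  have h3 : (Submodule.map Rb.subtype (Z.comap Rb.subtype)).FG := h2.map _
  rwa [Submodule.map_comap_subtype, inf_eq_right.mpr h] at h3

lemma div_anti {W J J' : Submodule R K} (h : J ≤ J') : W / J' ≤ W / J := by
  intro x hx
  rw [Submodule.mem_div_iff_forall_mul_mem] at hx ⊢
  exact fun y hy => hx y (h hy)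

lemma krullDim_Icc_dual (ω : Submodule R K)
    (hdual : ∀ J : Submodule R K, J ≠ ⊥ → J.FG → ω / (ω / J) = J)
    (X Y : Submodule R K) (hYX : Y ≤ X)
    (hXR : X ≤ (integralClosure R K).toSubmodule)
    (hYne : Y ≠ ⊥)
    (hωYR : ω / Y ≤ (integralClosure R K).toSubmodule)
    (hωXne : ω / X ≠ ⊥) :
    Order.krullDim (Set.Icc Y X) = Order.krullDim (Set.Icc (ω / X) (ω / Y)) := by
  have hfgZ : ∀ Z : Submodule R K, Z ≤ X → Z.FG :=
    fun Z hZ => fg_of_le_Rbar (le_trans hZ hXR)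
  have hneZ : ∀ Z : Submodule R K, Y ≤ Z → Z ≠ ⊥ :=
    fun Z hZ hbot => hYne (le_bot_iff.mp (hbot ▸ hZ))
  have hfgW : ∀ W : Submodule R K, W ≤ ω / Y → W.FG :=
    fun W hW => fg_of_le_Rbar (le_trans hW hωYR)
  have hneW : ∀ W : Submodule R K, ω / X ≤ W → W ≠ ⊥ :=
    fun W hW hbot => hωXne (le_bot_iff.mp (hbot ▸ hW))
  have hZinv : ∀ Z : Submodule R K, Y ≤ Z → Z ≤ X → ω / (ω / Z) = Z :=
    fun Z h1 h2 => hdual Z (hneZ Z h1) (hfgZ Z h2)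
  have hWinv : ∀ W : Submodule R K, ω / X ≤ W → W ≤ ω / Y → ω / (ω / W) = W :=
    fun W h1 h2 => hdual W (hneW W h1) (hfgW W h2)
  refine le_antisymm ?_ ?_
  · have h1 : Order.krullDim (Set.Icc Y X) ≤
        Order.krullDim ((Set.Icc (ω / X) (ω / Y))ᵒᵈ) := by
      refine Order.krullDim_le_of_strictMono
        (fun Z => OrderDual.toDual ⟨ω / Z.1, div_anti Z.2.2, div_anti Z.2.1⟩) ?_
      intro Z Z' hZZ'
      have hlt : (Z : Submodule R K) < Z' := hZZ'
      rw [OrderDual.toDual_lt_toDual]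
      change ω / (Z' : Submodule R K) < ω / Z
      refine lt_of_le_of_ne (div_anti hlt.le) ?_
      intro heq
      have e1 : ω / (ω / (Z : Submodule R K)) = Z := hZinv Z Z.2.1 Z.2.2
      have e2 : ω / (ω / (Z' : Submodule R K)) = Z' := hZinv Z' Z'.2.1 Z'.2.2
      rw [← heq] at e1
      rw [e2] at e1
      exact hlt.ne' e1
    rwa [Order.krullDim_orderDual] at h1
  · have h1 : Order.krullDim (Set.Icc (ω / X) (ω / Y)) ≤
        Order.krullDim ((Set.Icc Y X)ᵒᵈ) := by
      refine Order.krullDim_le_of_strictMono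
        (fun W => OrderDual.toDual ⟨ω / W.1, ?_, ?_⟩) ?_
      · exact le_trans (le_of_eq (hZinv Y le_rfl hYX).symm) (div_anti W.2.2)
      · exact le_trans (div_anti W.2.1) (le_of_eq (hZinv X hYX le_rfl))
      · intro W W' hWW'
        have hlt : (W : Submodule R K) < W' := hWW'
        rw [OrderDual.toDual_lt_toDual]
        change ω / (W' : Submodule R K) < ω / W
        refine lt_of_le_of_ne (div_anti hlt.le) ?_
        intro heq
        have e1 : ω / (ω / (W : Submodule R K)) = W := hWinv W W.2.1 W.2.2
        have e2 : ω / (ω / (W' : Submodule R K)) = W' := hWinv W' W'.2.1 W'.2.2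
        rw [← heq] at e1
        rw [e2] at e1
        exact hlt.ne' e1
    rwa [Order.krullDim_orderDual] at h1

lemma krullDim_Icc_modular (A B : Submodule R K) :
    Order.krullDim (Set.Icc (A ⊓ B) A) = Order.krullDim (Set.Icc B (A ⊔ B)) :=
  Order.krullDim_eq_of_orderIso (infIccOrderIsoIccSup A B)

end Iso

section Aux2

variable {R : Type*} [CommRing R] [IsDomain R] [IsLocalRing R] [IsNoetherianRing R]
variable {K : Type*} [Field K] [Algebra R K] [IsFractionRing R K]
variable {v : K → WithTop ℤ}

lemma natcast_withtop (m : ℕ) : ((m : ℕ) : WithTop ℤ) = ((m : ℤ) : WithTop ℤ) := by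
  push_cast; rfl

lemma VS_diff_subset_Iio {X Y : Submodule R K} (c : ℕ)
    (hcond : ∀ z ∈ X, ((c : ℤ) : WithTop ℤ) ≤ v z → z ∈ Y) :
    VS v X \ VS v Y ⊆ Set.Iio c := by
  rintro m ⟨⟨z, hz, h0, hvz⟩, hnot⟩
  by_contra hge
  simp only [Set.mem_Iio, not_lt] at hge
  exact hnot ⟨z, hcond z hz (by rw [hvz]; exact_mod_cast hge), h0, hvz⟩

lemma ncard_diff_telescope (A : ℕ → Set ℕ) (m : ℕ)
    (hanti : ∀ i, 1 ≤ i → i ≤ m → A (i+1) ⊆ A i)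
    (hfin : (A 1 \ A (m+1)).Finite) :
    ∑ i ∈ Finset.Icc 1 m, (A i \ A (i+1)).ncard = (A 1 \ A (m+1)).ncard := by
  induction m with
  | zero => simp
  | succ m ih =>
    have hsub : A (m+1+1) ⊆ A (m+1) := hanti (m+1) (by omega) (by omega)
    have hchain : A (m+1) ⊆ A 1 := by
      clear hfin hsub ih
      induction m with
      | zero => exact le_rfl
      | succ m ih2 =>
        exact (hanti (m+1) (by omega) (by omega)).trans
          (ih2 (fun i h1 h2 => hanti i h1 (by omega)))
    have hunion : A 1 \ A (m+1+1) = (A 1 \ A (m+1)) ∪ (A (m+1) \ A (m+1+1)) := by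
      ext x
      constructor
      · rintro ⟨hx1, hx2⟩
        by_cases h : x ∈ A (m+1)
        · exact Or.inr ⟨h, hx2⟩
        · exact Or.inl ⟨hx1, h⟩
      · rintro (⟨hx1, hx2⟩ | ⟨hx1, hx2⟩)
        · exact ⟨hx1, fun hc => hx2 (hsub hc)⟩
        · exact ⟨hchain hx1, hx2⟩
    have hdisj : Disjoint (A 1 \ A (m+1)) (A (m+1) \ A (m+1+1)) := by
      rw [Set.disjoint_left]
      rintro x ⟨_, hx2⟩ ⟨hx3, _⟩
      exact hx2 hx3
    have hfin1 : (A 1 \ A (m+1)).Finite := by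
      refine hfin.subset ?_
      rintro x ⟨hx1, hx2⟩
      exact ⟨hx1, fun hc => hx2 (hsub hc)⟩
    have hfin2 : (A (m+1) \ A (m+1+1)).Finite := by
      refine hfin.subset ?_
      rintro x ⟨hx1, hx2⟩
      exact ⟨hchain hx1, hx2⟩
    rw [Finset.sum_Icc_succ_top (by omega : 1 ≤ m + 1)]
    rw [ih (fun i h1 h2 => hanti i h1 (by omega)) hfin1]
    rw [hunion, Set.ncard_union_eq hdisj hfin1 hfin2]

lemma pow_le_one_submodule {J : Submodule R K} (h : J ≤ 1) : ∀ m : ℕ, J ^ m ≤ 1 := by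
  intro m
  induction m with
  | zero => rw [pow_zero]
  | succ m ih =>
    rw [pow_succ]
    exact le_trans (mul_le_mul' ih h) (by rw [one_mul])

lemma mem_pow_self {J : Submodule R K} {z : K} (hz : z ∈ J) : ∀ m : ℕ, z ^ m ∈ J ^ m := by
  intro m
  induction m with
  | zero =>
    rw [pow_zero, pow_zero]
    exact Submodule.one_le.mp le_rfl
  | succ m ih =>
    rw [pow_succ, pow_succ]
    exact Submodule.mul_mem_mul ih hz

section WithDVR
variable [IsDiscreteValuationRing (integralClosure R K)]
variable (hv0 : ∀ y : K, v y = ⊤ ↔ y = 0)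
variable (hvmul : ∀ y z : K, v (y * z) = v y + v z)
variable (hvadd : ∀ y z : K, min (v y) (v z) ≤ v (y + z))
variable (hvRbar : ∀ y : K, y ∈ integralClosure R K ↔ 0 ≤ v y)

include hvadd hvmul in
lemma v_mul_ge {A B : Submodule R K} {a b : WithTop ℤ}
    (hA : ∀ x ∈ A, a ≤ v x) (hB : ∀ x ∈ B, b ≤ v x) :
    ∀ z ∈ A * B, a + b ≤ v z := by
  intro z hz
  refine Submodule.mul_induction_on hz ?_ ?_
  · intro x hx y hy
    rw [hvmul]
    exact add_le_add (hA x hx) (hB y hy)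
  · intro x y hx hy
    exact le_trans (le_min hx hy) (hvadd x y)

include hv0 hvmul hvRbar in
lemma div_self_le_Rbar (J : Submodule R K) (hJ1 : J ≤ 1) (hJne : J ≠ ⊥) :
    J / J ≤ (integralClosure R K).toSubmodule := by
  obtain ⟨q, hqJ, hq0⟩ := Submodule.exists_mem_ne_zero_of_ne_bot hJne
  intro z hz
  by_cases hz0 : z = 0
  · rw [hz0]; exact Submodule.zero_mem _
  have hzmul : ∀ m : ℕ, z ^ m * q ∈ J := by
    intro m
    induction m with
    | zero => simpa using hqJ
    | succ m ih =>
      have : z ^ (m+1) * q = z * (z ^ m * q) := by ring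
      rw [this]
      exact Submodule.mem_div_iff_forall_mul_mem.mp hz _ ih
  -- values
  have hvz : v z ≠ ⊤ := by simp [hv0, hz0]
  lift v z to ℤ using hvz with a ha
  have hq1 : q ∈ (1 : Submodule R K) := hJ1 hqJ
  have hqC : q ∈ integralClosure R K := by
    obtain ⟨r, hr⟩ := Submodule.mem_one.mp hq1
    rw [← hr]
    exact Subalgebra.algebraMap_mem _ r
  have hvq : v q ≠ ⊤ := by simp [hv0, hq0]
  lift v q to ℤ using hvq with bq hbq
  have hbq0 : 0 ≤ bq := by
    have := (hvRbar q).mp hqC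
    rw [← hbq] at this
    exact_mod_cast this
  have hvpow : ∀ m : ℕ, v (z ^ m) = ((m * a : ℤ) : WithTop ℤ) := by
    intro m
    induction m with
    | zero => simpa using v_one hv0 hvmul
    | succ m ih =>
      have : z ^ (m+1) = z ^ m * z := by ring
      rw [this, hvmul, ih, ← ha, ← WithTop.coe_add]
      congr 1
      push_cast
      ring
  -- each z^m * q has value ≥ 0
  have hval : ∀ m : ℕ, (0 : WithTop ℤ) ≤ ((m * a + bq : ℤ) : WithTop ℤ) := by
    intro m
    have h1 : z ^ m * q ∈ (1 : Submodule R K) := hJ1 (hzmul m)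
    have h2 : z ^ m * q ∈ integralClosure R K := by
      obtain ⟨r, hr⟩ := Submodule.mem_one.mp h1
      rw [← hr]
      exact Subalgebra.algebraMap_mem _ r
    have h3 : (0:WithTop ℤ) ≤ v (z ^ m * q) := (hvRbar _).mp h2
    rwa [hvmul, hvpow m, ← hbq, ← WithTop.coe_add] at h3
  have hge : 0 ≤ a := by
    by_contra hneg
    push_neg at hneg
    have := hval (bq.toNat + 1)
    have h4 : (0:ℤ) ≤ (bq.toNat + 1 : ℕ) * a + bq := by exact_mod_cast this
    have h5 : ((bq.toNat + 1 : ℕ) : ℤ) = bq + 1 := by omega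
    nlinarith
  show z ∈ integralClosure R K
  rw [hvRbar, ← ha]
  exact_mod_cast hge

end WithDVR
end Aux2

end Stmt10Aux

-- MAIN THEOREM PART (appended to full.lean after aux)
open Stmt10Aux

theorem stmt_10
    (R : Type*) [CommRing R] [IsDomain R] [IsLocalRing R] [IsNoetherianRing R]
    (K : Type*) [Field K] [Algebra R K] [IsFractionRing R K]
    [IsDiscreteValuationRing (integralClosure R K)]
    [Module.Finite R (integralClosure R K)]
    (hres : ∀ y : integralClosure R K, ∃ a : R,
      y - algebraMap R (integralClosure R K) a ∈ maximalIdeal (integralClosure R K))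
    (hkinf : Infinite (ResidueField R))
    (v : K → WithTop ℤ) (hv0 : ∀ y : K, v y = ⊤ ↔ y = 0)
    (hvmul : ∀ y z : K, v (y * z) = v y + v z)
    (hvadd : ∀ y z : K, min (v y) (v z) ≤ v (y + z))
    (t : K) (ht : t ∈ integralClosure R K) (hvt : v t = 1)
    (hvRbar : ∀ y : K, y ∈ integralClosure R K ↔ 0 ≤ v y)
    (I : Ideal R) (hI0 : I ≠ ⊥) (hIrad : I.radical = maximalIdeal R)
    (hInp : ¬ I.IsPrincipal)
    (x : R) (hxI : x ∈ I)
    (ν : ℕ) (hν : IsLeast {n : ℕ | ∀ k ≥ n, I ^ (k + 1) = Ideal.span {x} * I ^ k} ν)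
    (ω : Submodule R K) (hω1 : 1 ≤ ω) (hω2 : ω < ((integralClosure R K).toSubmodule))
    (hωω : ω / ω = 1)
    (hωdual : ∀ J : Submodule R K, J ≠ ⊥ → J.FG → ω / (ω / J) = J)
    (δ : ℕ) (hδ : (δ : WithBot ℕ∞) = qlen R ((integralClosure R K).toSubmodule) 1)
    (c : ℕ) (hc : (c : WithBot ℕ∞) = qlen R ((integralClosure R K).toSubmodule) ((1 : Submodule R K) / ((integralClosure R K).toSubmodule)))
    (n : ℕ) (hn : n + δ = c)
    (s : ℕ → ℕ) (hs0 : s 0 = 0) (hsc : s n = c) (hsmono : StrictMonoOn s (Set.Iic n))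
    (hsval : ∀ i ≤ n, ((s i : ℕ) : WithTop ℤ) ∈ vvals v (1 : Submodule R K))
    (hsall : ∀ m : ℕ, (m : WithTop ℤ) ∈ vvals v (1 : Submodule R K) → m ≤ c → ∃ i ≤ n, s i = m)
    (Rmod : ℕ → Submodule R K)
    (hRmod : ∀ i, ∀ y : K, y ∈ Rmod i ↔ (y ∈ (1 : Submodule R K) ∧ (s i : WithTop ℤ) ≤ v y))
    (r : ℕ → ℕ)
    (hr : ∀ i, 1 ≤ i → i ≤ n → (r i : WithBot ℕ∞) =
      qlen R ((1 : Submodule R K) / Rmod i) ((1 : Submodule R K) / Rmod (i - 1)))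
    (Γ : Set ℕ)
    (hΓ : Γ = {i : ℕ | 1 ≤ i ∧ i ≤ n ∧ (s (i - 1) : WithTop ℤ) ∈ vvals v ((1 : Submodule R K) / (blowup R K I))})
    (a : ℕ) (ha : (a : WithBot ℕ∞) = qlen R ((integralClosure R K).toSubmodule) (ω * (blowup R K I)))
    (b : ℕ) (hb : (b : WithBot ℕ∞) = qlen R ((integralClosure R K).toSubmodule) ((1 : Submodule R K) / ((1 : Submodule R K) / (blowup R K I)))) :
    a ≤ ∑ i ∈ Finset.Icc 1 n, Γ.indicator r i ∧
      ∑ i ∈ Finset.Icc 1 n, Γ.indicator r i ≤ b := by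
  classical
  -- notation
  set Rb : Submodule R K := (integralClosure R K).toSubmodule with hRbdef
  set LB : Submodule R K := blowup R K I with hLBdef
  set CC : Submodule R K := (1 : Submodule R K) / Rb with hCCdef
  set DD : Submodule R K := (1 : Submodule R K) / LB with hDDdef
  -- membership in VS vs vvals
  have hVSvvals : ∀ (J : Submodule R K) (m : ℕ),
      m ∈ VS v J ↔ ((m : ℕ) : WithTop ℤ) ∈ vvals v J := by
    intro J m
    rw [natcast_withtop]
    constructor
    · rintro ⟨z, hz, h0, hvz⟩; exact ⟨z, ⟨hz, h0⟩, hvz⟩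
    · rintro ⟨z, ⟨hz, h0⟩, hvz⟩; exact ⟨z, hz, h0, hvz⟩
  -- basic facts
  have hone_le_Rb : (1 : Submodule R K) ≤ Rb := by
    intro z hz
    obtain ⟨r', hr'⟩ := Submodule.mem_one.mp hz
    rw [← hr']
    exact Subalgebra.algebraMap_mem _ r'
  have hRb_mul : ∀ {x' y' : K}, x' ∈ Rb → y' ∈ Rb → x' * y' ∈ Rb := by
    intro x' y' hx hy
    exact Subalgebra.mul_mem _ hx hy
  have hRbRb : Rb * Rb ≤ Rb := Submodule.mul_le.mpr fun x' hx y' hy => hRb_mul hx hy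
  have hone_mem_one : (1:K) ∈ (1 : Submodule R K) := Submodule.one_le.mp le_rfl
  have hLB_one : (1 : Submodule R K) ≤ LB := by
    rw [hLBdef, blowup]
    refine le_trans ?_ (le_iSup _ 0)
    rw [pow_zero]
    intro z hz
    rw [Submodule.mem_div_iff_forall_mul_mem]
    intro y hy
    obtain ⟨r1, hr1⟩ := Submodule.mem_one.mp hz
    obtain ⟨r2, hr2⟩ := Submodule.mem_one.mp hy
    exact Submodule.mem_one.mpr ⟨r1 * r2, by rw [map_mul, hr1, hr2]⟩
  have hidl_le_one : idl R K I ≤ 1 := by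
    rw [idl]
    rintro z hz
    obtain ⟨w, hw, rfl⟩ := Submodule.mem_map.mp hz
    exact Submodule.mem_one.mpr ⟨w, rfl⟩
  have hidl_ne : ∀ m : ℕ, (idl R K I) ^ m ≠ ⊥ := by
    intro m
    obtain ⟨x₀, hx₀I, hx₀0⟩ := Submodule.exists_mem_ne_zero_of_ne_bot hI0
    have h1 : algebraMap R K x₀ ∈ idl R K I := by
      rw [idl]
      exact Submodule.mem_map_of_mem hx₀I
    have h2 : algebraMap R K x₀ ≠ 0 := by
      intro h
      exact hx₀0 (IsFractionRing.injective R K (by rw [h, map_zero]))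
    exact (Submodule.ne_bot_iff _).mpr
      ⟨(algebraMap R K x₀) ^ m, mem_pow_self h1 m, pow_ne_zero m h2⟩
  have hLB_Rb : LB ≤ Rb := by
    rw [hLBdef, blowup]
    refine iSup_le fun m => ?_
    exact div_self_le_Rbar hv0 hvmul hvRbar _ (pow_le_one_submodule hidl_le_one m) (hidl_ne m)
  have hCC_one : CC ≤ 1 := by
    intro z hz
    have := Submodule.mem_div_iff_forall_mul_mem.mp hz 1 (hone_le_Rb hone_mem_one)
    rwa [mul_one] at this
  have hCC_stable : ∀ x' ∈ CC, ∀ y' ∈ Rb, x' * y' ∈ CC := by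
    intro x' hx y' hy
    rw [hCCdef, Submodule.mem_div_iff_forall_mul_mem]
    intro z hz
    rw [mul_assoc]
    exact Submodule.mem_div_iff_forall_mul_mem.mp hx _ (hRb_mul hy hz)
  have hCC_ne : CC ≠ ⊥ := by
    obtain ⟨sgen, hsgen⟩ := Rbar_fg (R := R) (K := K)
    obtain ⟨bb, hbb⟩ := IsLocalization.exist_integer_multiples (nonZeroDivisors R) sgen (id : K → K)
    refine (Submodule.ne_bot_iff _).mpr ⟨algebraMap R K (bb : R), ?_, ?_⟩
    · rw [hCCdef, Submodule.mem_div_iff_forall_mul_mem]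
      intro y hy
      have hy' : y ∈ Submodule.span R (sgen : Set K) := by
        rw [hsgen]; exact hy
      have hle : Submodule.span R (sgen : Set K) ≤
          Submodule.comap (LinearMap.mulLeft R (algebraMap R K (bb : R))) (1 : Submodule R K) := by
        rw [Submodule.span_le]
        intro u hu
        obtain ⟨rr, hrr⟩ := hbb u hu
        show algebraMap R K (bb : R) * u ∈ (1 : Submodule R K)
        refine Submodule.mem_one.mpr ⟨rr, ?_⟩
        rw [hrr]
        simp [Algebra.smul_def]
      have := hle hy'
      simpa using this
    · exact IsFractionRing.to_map_ne_zero_of_mem_nonZeroDivisors bb.2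
  -- powers of t
  have ht0 : t ≠ 0 := by
    intro h
    rw [h, (hv0 0).mpr rfl] at hvt
    exact (WithTop.top_ne_coe (a := (1:ℤ))) hvt
  have hvtpow : ∀ m : ℕ, v (t ^ m) = ((m : ℤ) : WithTop ℤ) := by
    intro m
    induction m with
    | zero => simpa using v_one hv0 hvmul
    | succ m ih =>
      rw [pow_succ, hvmul, ih, hvt]
      have h1 : (1 : WithTop ℤ) = ((1:ℤ) : WithTop ℤ) := rfl
      rw [h1, ← WithTop.coe_add]
      congr 1
  have htm_Rb : ∀ m : ℕ, t ^ m ∈ Rb := fun m => Subalgebra.pow_mem _ ht m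
  -- conductor is a value submodule at level c
  have hCC_eq : CC = Vsub hv0 hvmul hvadd hvRbar c := by
    have hCC_Rb : CC ≤ Rb := le_trans hCC_one hone_le_Rb
    have hne : (VS v CC).Nonempty := by
      obtain ⟨z, hz, h0⟩ := Submodule.exists_mem_ne_zero_of_ne_bot hCC_ne
      obtain ⟨m, hm⟩ := v_nat_of_mem hv0 hvRbar (hCC_Rb hz) h0
      exact ⟨m, z, hz, h0, hm⟩
    set γ := sInf (VS v CC) with hγ
    obtain ⟨x₀, hx₀C, hx₀0, hx₀v⟩ := Nat.sInf_mem hne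
    have hmin : ∀ m ∈ VS v CC, γ ≤ m := fun m hm => Nat.sInf_le hm
    -- value of x₀⁻¹
    have hx₀inv : v x₀⁻¹ = ((-(γ:ℤ) : ℤ) : WithTop ℤ) := by
      have h1 := v_inv hv0 hvmul hx₀0
      rw [hx₀v] at h1
      have h2 : v x₀⁻¹ ≠ ⊤ := by simp [hv0, hx₀0]
      lift v x₀⁻¹ to ℤ using h2 with e he
      have : (γ : ℤ) + e = 0 := by exact_mod_cast h1
      have : e = -(γ:ℤ) := by omega
      rw [this]
    have hCCVsub : CC = Vsub hv0 hvmul hvadd hvRbar γ := by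
      apply le_antisymm
      · intro z hz
        by_cases h0 : z = 0
        · rw [h0]; exact Submodule.zero_mem _
        obtain ⟨m, hm⟩ := v_nat_of_mem hv0 hvRbar (hCC_Rb hz) h0
        rw [mem_Vsub hv0 hvmul hvadd hvRbar, hm]
        exact_mod_cast hmin m ⟨z, hz, h0, hm⟩
      · intro z hz
        by_cases h0 : z = 0
        · rw [h0]; exact Submodule.zero_mem _
        rw [mem_Vsub hv0 hvmul hvadd hvRbar] at hz
        have hzx : z * x₀⁻¹ ∈ Rb := by
          show z * x₀⁻¹ ∈ integralClosure R K
          rw [hvRbar, hvmul, hx₀inv]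
          have h2 : v z ≠ ⊤ := by simp [hv0, h0]
          lift v z to ℤ using h2 with az haz
          have h3 : (γ:ℤ) ≤ az := by exact_mod_cast hz
          have : (0:ℤ) ≤ az + -(γ:ℤ) := by omega
          exact_mod_cast this
        have heq : z = x₀ * (z * x₀⁻¹) := by
          field_simp
        rw [heq]
        exact hCC_stable x₀ hx₀C _ hzx
    -- CL on (Rb, CC)
    have hcond : ∀ z ∈ Rb, ((γ:ℤ) : WithTop ℤ) ≤ v z → z ∈ CC := by
      intro z hz hvz
      rw [hCCVsub]
      exact (mem_Vsub hv0 hvmul hvadd hvRbar).mpr hvz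
    have hCL := krullDim_Icc_eq hv0 hvmul hvadd hvRbar hres Rb CC hCC_Rb le_rfl γ hcond
    have hq : qlen R Rb CC = Order.krullDim (Set.Icc CC Rb) :=
      qlen_eq_krullDim_Icc Rb CC hCC_Rb
    have hVSRb : VS v Rb = Set.univ := by
      ext m
      simp only [Set.mem_univ, iff_true]
      exact ⟨t ^ m, htm_Rb m, pow_ne_zero m ht0, hvtpow m⟩
    have hVSCC : VS v CC = {m : ℕ | γ ≤ m} := by
      ext m
      constructor
      · intro hm; exact hmin m hm
      · intro hm
        refine ⟨x₀ * t ^ (m - γ), hCC_stable x₀ hx₀C _ (htm_Rb _),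
          mul_ne_zero hx₀0 (pow_ne_zero _ ht0), ?_⟩
        rw [hvmul, hx₀v, hvtpow, ← WithTop.coe_add]
        congr 1
        have : γ ≤ m := hm
        push_cast
        omega
    have hdiffγ : VS v Rb \ VS v CC = Set.Iio γ := by
      rw [hVSRb, hVSCC]
      ext m
      simp [not_le]
    have hγcard : (VS v Rb \ VS v CC).ncard = γ := by
      rw [hdiffγ, ← Finset.coe_Iio, Set.ncard_coe_finset, Nat.card_Iio]
    have hfinal : (c : WithBot ℕ∞) = (γ : WithBot ℕ∞) := by
      rw [hc, hq, hCL, hγcard]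
    have : c = γ := by exact_mod_cast hfinal
    rw [hCCVsub, this]
  have hmemCC : ∀ z : K, z ∈ CC ↔ ((c : ℤ) : WithTop ℤ) ≤ v z := by
    intro z; rw [hCC_eq]; exact mem_Vsub hv0 hvmul hvadd hvRbar
  -- s-values
  have hmonos : ∀ {i j : ℕ}, i ≤ j → j ≤ n → s i ≤ s j :=
    fun {i j} hij hj => hsmono.monotoneOn (Set.mem_Iic.mpr (le_trans hij hj)) (Set.mem_Iic.mpr hj) hij
  have hs_le_c : ∀ j ≤ n, s j ≤ c := fun j hj => hsc ▸ hmonos hj le_rfl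
  -- Rmod basics
  have hRmod_le_one : ∀ i, Rmod i ≤ 1 := fun i z hz => ((hRmod i z).mp hz).1
  have hCC_le_Rmod : ∀ i, i ≤ n → CC ≤ Rmod i := by
    intro i hi z hz
    refine (hRmod i z).mpr ⟨hCC_one hz, ?_⟩
    rw [natcast_withtop]
    refine le_trans ?_ ((hmemCC z).mp hz)
    exact_mod_cast hs_le_c i hi
  have hRmod_ne : ∀ i, i ≤ n → Rmod i ≠ ⊥ := by
    intro i hi h
    exact hCC_ne (le_bot_iff.mp (h ▸ hCC_le_Rmod i hi))
  have hRmod_anti : ∀ i, 1 ≤ i → i ≤ n → Rmod i ≤ Rmod (i-1) := by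
    intro i h1 h2 z hz
    obtain ⟨hz1, hz2⟩ := (hRmod i z).mp hz
    refine (hRmod (i-1) z).mpr ⟨hz1, le_trans ?_ hz2⟩
    have := hmonos (show i-1 ≤ i by omega) h2
    exact_mod_cast this
  -- DD basics
  have hDD_le_one : DD ≤ 1 := by
    intro z hz
    have := Submodule.mem_div_iff_forall_mul_mem.mp hz 1 (hLB_one hone_mem_one)
    rwa [mul_one] at this
  have hCC_le_DD : CC ≤ DD := by
    intro w hw
    rw [hDDdef, Submodule.mem_div_iff_forall_mul_mem]
    intro y hy
    exact Submodule.mem_div_iff_forall_mul_mem.mp hw y (hLB_Rb hy)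
  -- criterion for membership in Rb
  have htc_CC : t ^ c ∈ CC := by
    rw [hCC_eq]
    exact (mem_Vsub hv0 hvmul hvadd hvRbar).mpr (le_of_eq (hvtpow c).symm)
  have hRb_crit : ∀ z : K, (∀ w ∈ CC, z * w ∈ (1 : Submodule R K)) → z ∈ Rb := by
    intro z hz
    by_cases h0 : z = 0
    · rw [h0]; exact Submodule.zero_mem _
    have h1 : z * t ^ c ∈ CC := by
      rw [hCCdef, Submodule.mem_div_iff_forall_mul_mem]
      intro y hy
      have h2 : t ^ c * y ∈ CC := by
        rw [hCC_eq, mem_Vsub hv0 hvmul hvadd hvRbar, hvmul, hvtpow]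
        have h3 := (hvRbar y).mp hy
        calc ((c:ℤ) : WithTop ℤ) = ((c:ℤ) : WithTop ℤ) + 0 := by rw [add_zero]
        _ ≤ ((c:ℤ) : WithTop ℤ) + v y := by gcongr
      rw [mul_assoc]
      exact hz _ h2
    rw [hCC_eq, mem_Vsub hv0 hvmul hvadd hvRbar, hvmul, hvtpow] at h1
    show z ∈ integralClosure R K
    rw [hvRbar]
    have h2 : v z ≠ ⊤ := by simp [hv0, h0]
    lift v z to ℤ using h2 with az haz
    have h3 : (c:ℤ) ≤ az + c := by exact_mod_cast h1
    have : (0:ℤ) ≤ az := by omega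
    exact_mod_cast this
  -- omega facts
  have hω_le_Rb : ω ≤ Rb := le_of_lt hω2
  have hstep_div : ∀ u : K, u ∈ ω / Rb → u ∈ (1 : Submodule R K) := by
    intro u hu
    rw [← hωω]
    rw [Submodule.mem_div_iff_forall_mul_mem]
    intro w hw
    exact Submodule.mem_div_iff_forall_mul_mem.mp hu w (hω_le_Rb hw)
  have homega_div_Rb : ω / Rb = CC := by
    apply le_antisymm
    · intro x' hx
      rw [hCCdef, Submodule.mem_div_iff_forall_mul_mem]
      intro y hy
      refine hstep_div _ ?_
      rw [Submodule.mem_div_iff_forall_mul_mem]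
      intro y' hy'
      rw [mul_assoc]
      exact Submodule.mem_div_iff_forall_mul_mem.mp hx _ (hRb_mul hy hy')
    · intro z hz
      rw [Submodule.mem_div_iff_forall_mul_mem]
      intro y hy
      exact hω1 (Submodule.mem_div_iff_forall_mul_mem.mp hz y hy)
  have hB7 : ∀ J : Submodule R K, (1 : Submodule R K) / J = ω / (ω * J) := by
    intro J
    ext x'
    rw [Submodule.mem_div_iff_forall_mul_mem, Submodule.mem_div_iff_forall_mul_mem]
    constructor
    · intro h z hz
      refine Submodule.mul_induction_on (C := fun z => x' * z ∈ ω) hz ?_ ?_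
      · intro w hw y' hy'
        obtain ⟨r', hr'⟩ := Submodule.mem_one.mp (h y' hy')
        have heq : x' * (w * y') = algebraMap R K r' * w := by
          rw [hr']; ring
        rw [heq, ← Algebra.smul_def]
        exact ω.smul_mem r' hw
      · intro z1 z2 h1 h2
        rw [mul_add]
        exact ω.add_mem h1 h2
    · intro h y' hy'
      rw [← hωω, Submodule.mem_div_iff_forall_mul_mem]
      intro w hw
      have heq : (x' * y') * w = x' * (w * y') := by ring
      rw [heq]
      exact h _ (Submodule.mul_mem_mul hw hy')
  -- the dual of Rmod: DM i = 1 / Rmod i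
  set DM : ℕ → Submodule R K := fun i => (1 : Submodule R K) / Rmod i with hDMdef
  have hDM_le_Rb : ∀ i, i ≤ n → DM i ≤ Rb := by
    intro i hi z hz
    refine hRb_crit z ?_
    intro w hw
    exact Submodule.mem_div_iff_forall_mul_mem.mp hz w (hCC_le_Rmod i hi hw)
  have hωRmod_le_Rb : ∀ i, ω * Rmod i ≤ Rb := fun i =>
    le_trans (mul_le_mul' hω_le_Rb (le_trans (hRmod_le_one i) hone_le_Rb)) hRbRb
  have hRmod_le_ωRmod : ∀ i, Rmod i ≤ ω * Rmod i := by
    intro i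
    have := mul_le_mul' hω1 (le_refl (Rmod i))
    rwa [one_mul] at this
  have hωRmod_ne : ∀ i, i ≤ n → ω * Rmod i ≠ ⊥ := by
    intro i hi h
    exact hRmod_ne i hi (le_bot_iff.mp (h ▸ hRmod_le_ωRmod i))
  have homega_div_DM : ∀ i, i ≤ n → ω / DM i = ω * Rmod i := by
    intro i hi
    rw [hDMdef]
    show ω / ((1 : Submodule R K) / Rmod i) = ω * Rmod i
    rw [hB7 (Rmod i)]
    exact hωdual (ω * Rmod i) (hωRmod_ne i hi) (fg_of_le_Rbar (hωRmod_le_Rb i))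
  -- helpers
  have hne_of_CC : ∀ {Z : Submodule R K}, CC ≤ Z → Z ≠ ⊥ :=
    fun {Z} h hb => hCC_ne (le_bot_iff.mp (hb ▸ h))
  have hCc_to_ωRmod : ∀ j, j ≤ n → ∀ z : K, ((c:ℤ) : WithTop ℤ) ≤ v z → z ∈ ω * Rmod j :=
    fun j hj z hvz => hRmod_le_ωRmod j (hCC_le_Rmod j hj ((hmemCC z).mpr hvz))
  -- ====== the `a`-side ======
  have h11 : (1 : Submodule R K) ≤ ω * LB := by
    have := mul_le_mul' hω1 hLB_one
    rwa [one_mul] at this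
  have hωLB_Rb : ω * LB ≤ Rb := le_trans (mul_le_mul' hω_le_Rb hLB_Rb) hRbRb
  have hdd : ω / (ω * LB) = DD := (hB7 LB).symm
  have hdual_a : Order.krullDim (Set.Icc (ω * LB) Rb) = Order.krullDim (Set.Icc CC DD) := by
    have h := krullDim_Icc_dual ω hωdual Rb (ω * LB) hωLB_Rb le_rfl
      (hne_of_CC (le_trans hCC_one h11))
      (by rw [hdd]; exact le_trans hDD_le_one hone_le_Rb)
      (by rw [homega_div_Rb]; exact hCC_ne)
    rwa [homega_div_Rb, hdd] at h
  have hCL_a := krullDim_Icc_eq hv0 hvmul hvadd hvRbar hres DD CC hCC_le_DD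
      (le_trans hDD_le_one hone_le_Rb) c
      (fun z _ hvz => (hmemCC z).mpr hvz)
  have hacast : (a : WithBot ℕ∞) = (((VS v DD \ VS v CC).ncard : ℕ) : WithBot ℕ∞) := by
    rw [ha, qlen_eq_krullDim_Icc Rb (ω * LB) hωLB_Rb, hdual_a, hCL_a]
  -- identify the gap set with Γ ∩ [1, n]
  set T : Finset ℕ := (Finset.Icc 1 n).filter (fun i => i ∈ Γ) with hTdef
  have hTmem : ∀ i, i ∈ T ↔ (1 ≤ i ∧ i ≤ n ∧ i ∈ Γ) := by
    intro i
    rw [hTdef, Finset.mem_filter, Finset.mem_Icc]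
    tauto
  have himage : VS v DD \ VS v CC = (fun i => s (i - 1)) '' (T : Set ℕ) := by
    ext m
    constructor
    · rintro ⟨hmD, hmC⟩
      have hmlt : m < c := by
        by_contra hcon
        push_neg at hcon
        obtain ⟨z, hz, h0, hvz⟩ := hmD
        exact hmC ⟨z, (hmemCC z).mpr (by rw [hvz]; exact_mod_cast hcon), h0, hvz⟩
      obtain ⟨z, hz, h0, hvz⟩ := hmD
      have hm1 : ((m:ℕ) : WithTop ℤ) ∈ vvals v (1 : Submodule R K) :=
        ⟨z, ⟨hDD_le_one hz, h0⟩, by rw [hvz, natcast_withtop]⟩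
      obtain ⟨j, hj, hsj⟩ := hsall m hm1 (le_of_lt hmlt)
      have hjn : j < n := by
        rcases lt_or_eq_of_le hj with h | h
        · exact h
        · exfalso; rw [h, hsc] at hsj; omega
      refine ⟨j + 1, ?_, ?_⟩
      · rw [Finset.mem_coe, hTmem]
        refine ⟨by omega, by omega, ?_⟩
        rw [hΓ]
        refine ⟨by omega, by omega, ?_⟩
        have hj1 : j + 1 - 1 = j := by omega
        rw [hj1, hsj]
        exact (hVSvvals DD m).mp ⟨z, hz, h0, hvz⟩
      · simp only [Nat.add_sub_cancel]
        exact hsj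
    · rintro ⟨i, hiT, rfl⟩
      rw [Finset.mem_coe, hTmem] at hiT
      obtain ⟨h1, h2, hiΓ⟩ := hiT
      rw [hΓ] at hiΓ
      obtain ⟨_, _, hval⟩ := hiΓ
      constructor
      · exact (hVSvvals DD (s (i-1))).mpr hval
      · rintro ⟨z, hz, h0, hvz⟩
        have hge : ((c:ℤ) : WithTop ℤ) ≤ v z := (hmemCC z).mp hz
        rw [hvz] at hge
        have hge' : c ≤ s (i-1) := by exact_mod_cast hge
        have hlt : s (i-1) < s n := hsmono (Set.mem_Iic.mpr (by omega)) (Set.mem_Iic.mpr le_rfl) (by omega)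
        rw [hsc] at hlt
        omega
  have hinj : Set.InjOn (fun i => s (i - 1)) (T : Set ℕ) := by
    intro i hi i' hi' heq
    rw [Finset.mem_coe, hTmem] at hi hi'
    have h1 : i - 1 = i' - 1 := by
      refine hsmono.injOn (Set.mem_Iic.mpr (by omega)) (Set.mem_Iic.mpr (by omega)) heq
    omega
  have hacard : a = T.card := by
    have h1 : (VS v DD \ VS v CC).ncard = T.card := by
      rw [himage, Set.ncard_image_of_injOn hinj, Set.ncard_coe_finset]
    have h2 : (a : WithBot ℕ∞) = ((T.card : ℕ) : WithBot ℕ∞) := by rw [hacast, h1]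
    exact_mod_cast h2
  -- ====== the value of r i ======
  have hrval : ∀ i, 1 ≤ i → i ≤ n → (r i : WithBot ℕ∞)
      = (((VS v (ω * Rmod (i-1)) \ VS v (ω * Rmod i)).ncard : ℕ) : WithBot ℕ∞) := by
    intro i h1 h2
    have hi1 : i - 1 ≤ n := by omega
    have hDMle : DM (i-1) ≤ DM i := div_anti (hRmod_anti i h1 h2)
    rw [hr i h1 h2]
    have hq : qlen R ((1 : Submodule R K) / Rmod i) ((1 : Submodule R K) / Rmod (i-1))
        = Order.krullDim (Set.Icc (DM (i-1)) (DM i)) :=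
      qlen_eq_krullDim_Icc (DM i) (DM (i-1)) hDMle
    rw [hq]
    have hdual_r := krullDim_Icc_dual ω hωdual (DM i) (DM (i-1)) hDMle
        (hDM_le_Rb i h2)
        (hne_of_CC (by
          intro w hw
          rw [hDMdef]
          show w ∈ (1 : Submodule R K) / Rmod (i-1)
          rw [Submodule.mem_div_iff_forall_mul_mem]
          intro y hy
          exact Submodule.mem_div_iff_forall_mul_mem.mp hw y (hone_le_Rb (hRmod_le_one _ hy))))
        (by rw [homega_div_DM (i-1) hi1]; exact hωRmod_le_Rb (i-1))
        (by rw [homega_div_DM i h2]; exact hωRmod_ne i h2)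
    rw [hdual_r, homega_div_DM i h2, homega_div_DM (i-1) hi1]
    exact krullDim_Icc_eq hv0 hvmul hvadd hvRbar hres (ω * Rmod (i-1)) (ω * Rmod i)
        (mul_le_mul' le_rfl (hRmod_anti i h1 h2)) (hωRmod_le_Rb (i-1)) c
        (fun z _ hvz => hCc_to_ωRmod i h2 z hvz)
  -- r i ≥ 1 on [1, n]
  have hrpos : ∀ i, 1 ≤ i → i ≤ n → 1 ≤ r i := by
    intro i h1 h2
    obtain ⟨y, ⟨hy1, hy0⟩, hvy⟩ := hsval (i-1) (by omega)
    have hy_mem : y ∈ ω * Rmod (i-1) :=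
      hRmod_le_ωRmod (i-1) ((hRmod _ y).mpr ⟨hy1, le_of_eq hvy.symm⟩)
    have hin : s (i-1) ∈ VS v (ω * Rmod (i-1)) :=
      ⟨y, hy_mem, hy0, by rw [hvy, natcast_withtop]⟩
    have hnot : s (i-1) ∉ VS v (ω * Rmod i) := by
      rintro ⟨z, hz, h0, hvz⟩
      have hge := v_mul_ge hvmul hvadd (A := ω) (B := Rmod i)
        (a := (0 : WithTop ℤ)) (b := (((s i : ℤ)) : WithTop ℤ))
        (fun x' hx' => (hvRbar x').mp (hω_le_Rb hx'))
        (fun x' hx' => by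
          have := ((hRmod i x').mp hx').2
          rwa [natcast_withtop] at this) z hz
      rw [hvz, zero_add] at hge
      have hge' : s i ≤ s (i-1) := by exact_mod_cast hge
      have hlt : s (i-1) < s i := hsmono (Set.mem_Iic.mpr (by omega)) (Set.mem_Iic.mpr h2) (by omega)
      omega
    have hfin : (VS v (ω * Rmod (i-1)) \ VS v (ω * Rmod i)).Finite :=
      (Set.finite_Iio c).subset (VS_diff_subset_Iio c (fun z _ hvz => hCc_to_ωRmod i h2 z hvz))
    have hpos : 0 < (VS v (ω * Rmod (i-1)) \ VS v (ω * Rmod i)).ncard :=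
      (Set.ncard_pos hfin).mpr ⟨s (i-1), hin, hnot⟩
    have := hrval i h1 h2
    have hcard : r i = (VS v (ω * Rmod (i-1)) \ VS v (ω * Rmod i)).ncard := by exact_mod_cast this
    omega
  -- ====== the `b`-side ======
  set LS : Submodule R K := (1 : Submodule R K) / DD with hLSdef
  have hLS_Rb : LS ≤ Rb := fun z hz => hRb_crit z
    (fun w hw => Submodule.mem_div_iff_forall_mul_mem.mp hz w (hCC_le_DD hw))
  have hCC_le_LS : CC ≤ LS := by
    intro w hw
    rw [hLSdef, Submodule.mem_div_iff_forall_mul_mem]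
    intro d hd
    exact Submodule.mem_div_iff_forall_mul_mem.mp hw d (hone_le_Rb (hDD_le_one hd))
  have hωDD_le_Rb : ω * DD ≤ Rb :=
    le_trans (mul_le_mul' hω_le_Rb (le_trans hDD_le_one hone_le_Rb)) hRbRb
  have hDD_le_ωDD : DD ≤ ω * DD := by
    have := mul_le_mul' hω1 (le_refl DD)
    rwa [one_mul] at this
  have hCC_le_ωDD : CC ≤ ω * DD := le_trans hCC_le_DD hDD_le_ωDD
  have hωDD_ne : ω * DD ≠ ⊥ := hne_of_CC hCC_le_ωDD
  have homega_div_LS : ω / LS = ω * DD := by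
    rw [hLSdef]
    show ω / ((1 : Submodule R K) / DD) = ω * DD
    rw [hB7 DD]
    exact hωdual _ hωDD_ne (fg_of_le_Rbar hωDD_le_Rb)
  have hdual_b : Order.krullDim (Set.Icc LS Rb) = Order.krullDim (Set.Icc CC (ω * DD)) := by
    have h := krullDim_Icc_dual ω hωdual Rb LS hLS_Rb le_rfl (hne_of_CC hCC_le_LS)
      (by rw [homega_div_LS]; exact hωDD_le_Rb)
      (by rw [homega_div_Rb]; exact hCC_ne)
    rwa [homega_div_Rb, homega_div_LS] at h
  have hCL_b := krullDim_Icc_eq hv0 hvmul hvadd hvRbar hres (ω * DD) CC hCC_le_ωDD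
      hωDD_le_Rb c (fun z _ hvz => (hmemCC z).mpr hvz)
  have hbcast : (b : WithBot ℕ∞) = (((VS v (ω * DD) \ VS v CC).ncard : ℕ) : WithBot ℕ∞) := by
    rw [hb, qlen_eq_krullDim_Icc Rb LS hLS_Rb, hdual_b, hCL_b]
  have hbval : b = (VS v (ω * DD) \ VS v CC).ncard := by exact_mod_cast hbcast
  -- ====== the chain N_i ======
  set NN : ℕ → Submodule R K := fun i =>
      (ω * (DD ⊓ Vsub hv0 hvmul hvadd hvRbar (s (i - 1)))) ⊔ CC with hNNdef
  have hNN_le_ωDD : ∀ i, NN i ≤ ω * DD := fun i =>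
    sup_le (mul_le_mul' le_rfl inf_le_left) hCC_le_ωDD
  have hNN_anti : ∀ i, 1 ≤ i → i ≤ n → NN (i+1) ≤ NN i := by
    intro i h1 h2
    refine sup_le_sup_right (mul_le_mul' le_rfl (inf_le_inf_left _ ?_)) _
    intro z hz
    rw [mem_Vsub hv0 hvmul hvadd hvRbar] at hz ⊢
    refine le_trans ?_ hz
    have hle : s (i-1) ≤ s (i+1-1) := by
      have hidx : i + 1 - 1 = i := by omega
      rw [hidx]
      exact hmonos (by omega) h2
    exact_mod_cast hle
  have hCC_le_NN : ∀ i, CC ≤ NN i := fun i => le_sup_right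
  have hNN_le_ωRmod : ∀ i, 1 ≤ i → i ≤ n → NN (i+1) ≤ ω * Rmod i := by
    intro i h1 h2
    refine sup_le ?_ (le_trans (hCC_le_Rmod i h2) (hRmod_le_ωRmod i))
    refine mul_le_mul' le_rfl ?_
    intro z hz
    obtain ⟨hz1, hz2⟩ := Submodule.mem_inf.mp hz
    refine (hRmod i z).mpr ⟨hDD_le_one hz1, ?_⟩
    rw [mem_Vsub hv0 hvmul hvadd hvRbar] at hz2
    have hidx : i + 1 - 1 = i := by omega
    rw [hidx] at hz2
    rwa [natcast_withtop]
  -- ====== per-step bound ======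
  have hstepbound : ∀ i, 1 ≤ i → i ≤ n → i ∈ Γ →
      r i ≤ (VS v (NN i) \ VS v (NN (i+1))).ncard := by
    intro i h1 h2 hiΓ
    rw [hΓ] at hiΓ
    obtain ⟨_, _, hval⟩ := hiΓ
    obtain ⟨g, ⟨hgD, hg0⟩, hvg⟩ := hval
    rw [natcast_withtop] at hvg
    have hgR : g ∈ Rmod (i-1) :=
      (hRmod _ g).mpr ⟨hDD_le_one hgD, by rw [← natcast_withtop] at hvg; exact le_of_eq hvg.symm⟩
    have hsplit : Rmod (i-1) = Submodule.span R {g} ⊔ Rmod i := by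
      apply le_antisymm
      · refine le_of_VS_subset hv0 hvmul hvadd hvRbar hres (Rmod (i-1)) (Rmod i)
          (Submodule.span R {g} ⊔ Rmod i) (Rmod (i-1))
          (le_trans (hRmod_le_one _) hone_le_Rb)
          le_sup_right
          (sup_le (Submodule.span_le.mpr (Set.singleton_subset_iff.mpr hgR)) (hRmod_anti i h1 h2))
          le_rfl (s i) ?_ ?_
        · intro z hz hvz
          refine (hRmod i z).mpr ⟨((hRmod _ z).mp hz).1, ?_⟩
          rwa [natcast_withtop]
        · intro m hm
          obtain ⟨z, hz, h0, hvz⟩ := hm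
          obtain ⟨hz1, hz2⟩ := (hRmod _ z).mp hz
          rw [natcast_withtop, hvz] at hz2
          have hmge : s (i-1) ≤ m := by exact_mod_cast hz2
          by_cases hge : s i ≤ m
          · exact ⟨z, Submodule.mem_sup_right ((hRmod i z).mpr ⟨hz1, by rw [natcast_withtop, hvz]; exact_mod_cast hge⟩), h0, hvz⟩
          · push_neg at hge
            have hm1 : ((m:ℕ) : WithTop ℤ) ∈ vvals v (1 : Submodule R K) :=
              ⟨z, ⟨hz1, h0⟩, by rw [hvz, natcast_withtop]⟩
            have hmc : m ≤ c := le_trans (le_of_lt hge) (hs_le_c i h2)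
            obtain ⟨j, hj, hsj⟩ := hsall m hm1 hmc
            have hjeq : j = i - 1 := by
              by_contra hne2
              rcases lt_or_gt_of_ne hne2 with hlt | hgt
              · have := hsmono (Set.mem_Iic.mpr hj)
                  (Set.mem_Iic.mpr (by omega : i - 1 ≤ n)) hlt
                omega
              · have hile : i ≤ j := by omega
                have := hmonos hile hj
                omega
            subst hjeq
            refine ⟨g, Submodule.mem_sup_left (Submodule.mem_span_singleton_self g), hg0, ?_⟩
            rw [hvg, hsj]
      · exact sup_le (Submodule.span_le.mpr (Set.singleton_subset_iff.mpr hgR)) (hRmod_anti i h1 h2)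
    have hmulsplit : ω * Rmod (i-1) = (ω * Submodule.span R {g}) ⊔ (ω * Rmod i) := by
      rw [hsplit, Submodule.mul_sup]
    have hspan_le : Submodule.span R {g} ≤ DD ⊓ Vsub hv0 hvmul hvadd hvRbar (s (i-1)) := by
      refine Submodule.span_le.mpr (Set.singleton_subset_iff.mpr ?_)
      exact Submodule.mem_inf.mpr ⟨hgD, (mem_Vsub hv0 hvmul hvadd hvRbar).mpr (le_of_eq hvg.symm)⟩
    have hωg_le_NN : ω * Submodule.span R {g} ≤ NN i :=
      le_trans (mul_le_mul' le_rfl hspan_le) le_sup_left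
    have hωg_Rb : ω * Submodule.span R {g} ≤ Rb :=
      le_trans (le_trans (mul_le_mul' le_rfl hspan_le)
        (mul_le_mul' le_rfl inf_le_left)) hωDD_le_Rb
    have hmod1 : Order.krullDim (Set.Icc (ω * Rmod i) (ω * Rmod (i-1)))
        = Order.krullDim (Set.Icc ((ω * Submodule.span R {g}) ⊓ (ω * Rmod i)) (ω * Submodule.span R {g})) := by
      rw [hmulsplit]
      exact (krullDim_Icc_modular _ _).symm
    have hCLg := krullDim_Icc_eq hv0 hvmul hvadd hvRbar hres (ω * Submodule.span R {g})
        ((ω * Submodule.span R {g}) ⊓ (ω * Rmod i)) inf_le_left hωg_Rb c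
        (fun z hz hvz => Submodule.mem_inf.mpr ⟨hz, hCc_to_ωRmod i h2 z hvz⟩)
    have hCLr := krullDim_Icc_eq hv0 hvmul hvadd hvRbar hres (ω * Rmod (i-1)) (ω * Rmod i)
        (mul_le_mul' le_rfl (hRmod_anti i h1 h2)) (hωRmod_le_Rb (i-1)) c
        (fun z _ hvz => hCc_to_ωRmod i h2 z hvz)
    have hn1 : r i = (VS v (ω * Submodule.span R {g})
        \ VS v ((ω * Submodule.span R {g}) ⊓ (ω * Rmod i))).ncard := by
      have h := hrval i h1 h2
      rw [← hCLr, hmod1, hCLg] at h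
      exact_mod_cast h
    have hfin2 : (VS v (ω * Submodule.span R {g})
        \ VS v ((ω * Submodule.span R {g}) ⊓ NN (i+1))).Finite :=
      (Set.finite_Iio c).subset (VS_diff_subset_Iio c
        (fun z hz hvz => Submodule.mem_inf.mpr ⟨hz, hCC_le_NN (i+1) ((hmemCC z).mpr hvz)⟩))
    have hn2 : r i ≤ (VS v (ω * Submodule.span R {g})
        \ VS v ((ω * Submodule.span R {g}) ⊓ NN (i+1))).ncard := by
      rw [hn1]
      refine Set.ncard_le_ncard ?_ hfin2
      intro m hm
      exact ⟨hm.1, fun hc2 => hm.2 (VS_mono (inf_le_inf_left _ (hNN_le_ωRmod i h1 h2)) hc2)⟩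
    have hmod2 : Order.krullDim (Set.Icc ((ω * Submodule.span R {g}) ⊓ NN (i+1)) (ω * Submodule.span R {g}))
        = Order.krullDim (Set.Icc (NN (i+1)) ((ω * Submodule.span R {g}) ⊔ NN (i+1))) :=
      krullDim_Icc_modular _ _
    have hCLg2 := krullDim_Icc_eq hv0 hvmul hvadd hvRbar hres (ω * Submodule.span R {g})
        ((ω * Submodule.span R {g}) ⊓ NN (i+1)) inf_le_left hωg_Rb c
        (fun z hz hvz => Submodule.mem_inf.mpr ⟨hz, hCC_le_NN (i+1) ((hmemCC z).mpr hvz)⟩)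
    have hP_Rb : (ω * Submodule.span R {g}) ⊔ NN (i+1) ≤ Rb :=
      sup_le hωg_Rb (le_trans (hNN_le_ωDD (i+1)) hωDD_le_Rb)
    have hCLP := krullDim_Icc_eq hv0 hvmul hvadd hvRbar hres
        ((ω * Submodule.span R {g}) ⊔ NN (i+1)) (NN (i+1)) le_sup_right hP_Rb c
        (fun z _ hvz => hCC_le_NN (i+1) ((hmemCC z).mpr hvz))
    have hn3 : (VS v (ω * Submodule.span R {g})
        \ VS v ((ω * Submodule.span R {g}) ⊓ NN (i+1))).ncard
        = (VS v ((ω * Submodule.span R {g}) ⊔ NN (i+1)) \ VS v (NN (i+1))).ncard := by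
      have h := hmod2
      rw [hCLg2, hCLP] at h
      exact_mod_cast h
    have hfin4 : (VS v (NN i) \ VS v (NN (i+1))).Finite :=
      (Set.finite_Iio c).subset (VS_diff_subset_Iio c
        (fun z _ hvz => hCC_le_NN (i+1) ((hmemCC z).mpr hvz)))
    calc r i ≤ _ := hn2
    _ = _ := hn3
    _ ≤ (VS v (NN i) \ VS v (NN (i+1))).ncard := by
      refine Set.ncard_le_ncard ?_ hfin4
      intro m hm
      exact ⟨VS_mono (sup_le hωg_le_NN (hNN_anti i h1 h2)) hm.1, hm.2⟩
  -- ====== summation ======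
  have hsum_eq : ∑ i ∈ Finset.Icc 1 n, Γ.indicator r i = ∑ i ∈ T, r i := by
    rw [hTdef, Finset.sum_filter]
    refine Finset.sum_congr rfl ?_
    intro i _
    by_cases h : i ∈ Γ <;> simp [h]
  constructor
  · rw [hsum_eq, hacard]
    calc T.card = ∑ _i ∈ T, 1 := by rw [Finset.card_eq_sum_ones]
    _ ≤ ∑ i ∈ T, r i := by
      refine Finset.sum_le_sum ?_
      intro i hi
      obtain ⟨ha1, ha2, _⟩ := (hTmem i).mp hi
      exact hrpos i ha1 ha2
  · rw [hsum_eq]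
    have htel : ∑ i ∈ Finset.Icc 1 n, (VS v (NN i) \ VS v (NN (i+1))).ncard
        = (VS v (NN 1) \ VS v (NN (n+1))).ncard := by
      refine ncard_diff_telescope (fun i => VS v (NN i)) n
        (fun i hi1 hi2 => VS_mono (hNN_anti i hi1 hi2)) ?_
      refine (Set.finite_Iio c).subset (VS_diff_subset_Iio c ?_)
      exact fun z _ hvz => hCC_le_NN (n+1) ((hmemCC z).mpr hvz)
    have hfinb : (VS v (ω * DD) \ VS v CC).Finite :=
      (Set.finite_Iio c).subset (VS_diff_subset_Iio c
        (fun z _ hvz => (hmemCC z).mpr hvz))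
    calc ∑ i ∈ T, r i
        ≤ ∑ i ∈ T, (VS v (NN i) \ VS v (NN (i+1))).ncard := by
          refine Finset.sum_le_sum ?_
          intro i hi
          obtain ⟨ha1, ha2, ha3⟩ := (hTmem i).mp hi
          exact hstepbound i ha1 ha2 ha3
    _ ≤ ∑ i ∈ Finset.Icc 1 n, (VS v (NN i) \ VS v (NN (i+1))).ncard := by
          refine Finset.sum_le_sum_of_subset ?_
          rw [hTdef]
          exact Finset.filter_subset _ _
    _ = (VS v (NN 1) \ VS v (NN (n+1))).ncard := htel
    _ ≤ (VS v (ω * DD) \ VS v CC).ncard := by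
          refine Set.ncard_le_ncard ?_ hfinb
          intro m hm
          exact ⟨VS_mono (hNN_le_ωDD 1) hm.1, fun hc2 => hm.2 (VS_mono (hCC_le_NN (n+1)) hc2)⟩
    _ = b := hbval.symm
end
end
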